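/- arXiv:0904.1150 — 2 statements merged into one kernel-verified Lean document; each statement's English description precedes it below -/
import Mathlib

section
/- Key lemma for Theorem 1: For a non-controllable FSC with a source in 𝒫(u,u) where u ≥ v ≥ 0, the channel output at time t is conditionally independent of the remote past given the recent window: for every t ∈ {v+2,…,N}, I( (X^{t-v-1}, S_0^{t-v-2}) ; Y_t | (Y^{t-1}, X_{t-v}^t, S_{t-v-1}) ) = 0, where the information is computed under the joint law induced by the source. -/
/-!
Common framework: finite-state channels (FSCs), non-controllable FSCs,
sources with delayed feedback (FB) and delayed state information (SI),
induced joint pmfs, conditional probabilities and conditional mutual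
information, following Huang–Kavčić–Ma, "Upper Bounds on the Capacities of
Non-Controllable Finite-State Channels with/without Feedback".

Time convention: for a horizon `N`, the channel inputs are `X_1,…,X_N`
(coordinate `x i` of `x : Fin N → X` is `X_{i+1}`), the states are
`S_0,…,S_N` (coordinate `s j` of `s : Fin (N+1) → S` is `S_j`), and the
outputs are `Y_1,…,Y_N` (coordinate `y i` is `Y_{i+1}`).
-/

open Finset

noncomputable section

namespace FSCPaper

/-- Probability of an event under a pmf `p` on a finite sample space. -/
def prE {Ω : Type} [Fintype Ω] (p : Ω → ℝ) (E : Set Ω) : ℝ :=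
  ∑ ω : Ω, E.indicator p ω

/-- Conditional probability `Pr(E | F)`, a ratio of (sums of) marginals
(with the `0/0 = 0` junk-value convention of real division). -/
def condPr {Ω : Type} [Fintype Ω] (p : Ω → ℝ) (E F : Set Ω) : ℝ :=
  prE p (E ∩ F) / prE p F

/-- The conditional pmf `Pr(· | F)` given an event `F`. -/
def condPMF {Ω : Type} [Fintype Ω] (p : Ω → ℝ) (F : Set Ω) : Ω → ℝ :=
  fun ω => F.indicator p ω / prE p F

/-- Conditional mutual information `I(A;B|C)` of finite-valued random
variables `fA, fB, fC` under the pmf `p`; zero-probability terms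
contribute `0` (the factor in front of the logarithm vanishes). -/
def condMI {Ω A B C : Type} [Fintype Ω] [Fintype A] [Fintype B] [Fintype C]
    (p : Ω → ℝ) (fA : Ω → A) (fB : Ω → B) (fC : Ω → C) : ℝ :=
  ∑ a : A, ∑ b : B, ∑ c : C,
    prE p {ω | fA ω = a ∧ fB ω = b ∧ fC ω = c} *
      Real.log (condPr p {ω | fA ω = a ∧ fB ω = b} {ω | fC ω = c} /
        (condPr p {ω | fA ω = a} {ω | fC ω = c} *
          condPr p {ω | fB ω = b} {ω | fC ω = c}))

/-- Trajectories `(x_1^N, s_0^N, y_1^N)`. -/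
abbrev Traj (X S Y : Type) (N : ℕ) : Type :=
  (Fin N → X) × (Fin (N + 1) → S) × (Fin N → Y)

/-- A general finite-state channel: channel transition kernel
`W(y, s' | x, s)` (a pmf on `Y × S` for each `(x,s)`) and initial state
pmf `init`. -/
structure FSC (X S Y : Type) [Fintype S] [Fintype Y] : Type where
  W : Y → S → X → S → ℝ
  init : S → ℝ
  W_nonneg : ∀ y s' x s, 0 ≤ W y s' x s
  W_sum : ∀ x s, (∑ y : Y, ∑ s' : S, W y s' x s) = 1
  init_nonneg : ∀ s, 0 ≤ init s
  init_sum : (∑ s : S, init s) = 1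

/-- A source without feedback: conditional pmfs `π_t(x_t | x^{t-1})`;
`pol t x a` is the probability that `X_{t+1} = a` given that the previous
inputs are the corresponding coordinates of `x` (by `causal` it depends
only on the coordinates `x j` with `j < t`). -/
structure FFSource (X : Type) [Fintype X] (N : ℕ) : Type where
  pol : Fin N → (Fin N → X) → X → ℝ
  nonneg : ∀ t x a, 0 ≤ pol t x a
  sum_one : ∀ t x, (∑ a : X, pol t x a) = 1
  causal : ∀ (t : Fin N) (x x' : Fin N → X),
    (∀ j : Fin N, (j : ℕ) < (t : ℕ) → x j = x' j) → pol t x = pol t x'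

/-- A non-controllable finite-state channel: output kernel `P(y|x,s)`,
free state-transition kernel `Q(s'|s)`, and initial state pmf `init`. -/
structure NCFSC (X S Y : Type) [Fintype S] [Fintype Y] : Type where
  P : Y → X → S → ℝ
  Q : S → S → ℝ
  init : S → ℝ
  P_nonneg : ∀ y x s, 0 ≤ P y x s
  P_sum : ∀ x s, (∑ y : Y, P y x s) = 1
  Q_nonneg : ∀ s' s, 0 ≤ Q s' s
  Q_sum : ∀ s, (∑ s' : S, Q s' s) = 1
  init_nonneg : ∀ s, 0 ≤ init s
  init_sum : (∑ s : S, init s) = 1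

/-- A source with `u`-delayed feedback and `u`-delayed state information
(the set `𝒫(u,u)`): `pol t x s y a` is
`π_{t+1}(a | x^{t}, s_0^{t-u}, y^{t-u})` in 1-based time; by `causal` it
depends on `(x, s, y)` only through the coordinates
`x_1^{t}` (indices `j < t`), `s_0^{t-u}` (indices `j + u ≤ t`) and
`y_1^{t-u}` (indices `j + u + 1 ≤ t`), i.e. on the past inputs, the
`u`-delayed state information and the `u`-delayed output feedback. -/
structure Source (X S Y : Type) [Fintype X] [Fintype S] [Fintype Y] (N u : ℕ) : Type where
  pol : Fin N → (Fin N → X) → (Fin (N + 1) → S) → (Fin N → Y) → X → ℝ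
  nonneg : ∀ t x s y a, 0 ≤ pol t x s y a
  sum_one : ∀ t x s y, (∑ a : X, pol t x s y a) = 1
  causal : ∀ (t : Fin N) (x x' : Fin N → X) (s s' : Fin (N + 1) → S) (y y' : Fin N → Y),
    (∀ j : Fin N, (j : ℕ) < (t : ℕ) → x j = x' j) →
    (∀ j : Fin (N + 1), (j : ℕ) + u ≤ (t : ℕ) → s j = s' j) →
    (∀ j : Fin N, (j : ℕ) + u + 1 ≤ (t : ℕ) → y j = y' j) →
    pol t x s y = pol t x' s' y'

variable {X S Y : Type} [Fintype X] [Fintype S] [Fintype Y]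

/-- Joint pmf induced by a general FSC and a feedforward source:
`Pr(x^N, s_0^N, y^N) = μ(s_0) ∏_t π_t(x_t|x^{t-1}) W(y_t, s_t | x_t, s_{t-1})`. -/
def jointP0 {N : ℕ} (ch : FSC X S Y) (src : FFSource X N) (ω : Traj X S Y N) : ℝ :=
  ch.init (ω.2.1 0) *
    ∏ i : Fin N,
      src.pol i ω.1 (ω.1 i) *
        ch.W (ω.2.2 i) (ω.2.1 i.succ) (ω.1 i) (ω.2.1 i.castSucc)

/-- Joint channel transition `W(y, s' | x, s) = P(y|x,s) · Q(s'|s)` of a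
non-controllable FSC. -/
def NCFSC.W (ch : NCFSC X S Y) (y : Y) (s' : S) (x : X) (s : S) : ℝ :=
  ch.P y x s * ch.Q s' s

/-- Joint pmf induced by a non-controllable FSC and a source in `𝒫(u,u)`:
`Pr(x^N, s_0^N, y^N) = μ(s_0) ∏_t π_t(x_t|x^{t-1},s_0^{t-u-1},y^{t-u-1}) W(y_t,s_t|x_t,s_{t-1})`. -/
def jointP {N u : ℕ} (ch : NCFSC X S Y) (src : Source X S Y N u) (ω : Traj X S Y N) : ℝ :=
  ch.init (ω.2.1 0) *
    ∏ i : Fin N,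
      src.pol i ω.1 ω.2.1 ω.2.2 (ω.1 i) *
        ch.W (ω.2.2 i) (ω.2.1 i.succ) (ω.1 i) (ω.2.1 i.castSucc)

/-- A source in `𝒫(u,u)` is a `v`-th order conditional Markov source
(the set `𝒫_v(u,u)`) if each policy depends on its arguments only through
`(x_{t-v}^{t-1}, s_{t-v-1}^{t-u-1}, y^{t-u-1})` (windows truncated for
small `t`). -/
def IsMarkov {N u : ℕ} (v : ℕ) (src : Source X S Y N u) : Prop :=
  ∀ (t : Fin N) (x x' : Fin N → X) (s s' : Fin (N + 1) → S) (y y' : Fin N → Y),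
    (∀ j : Fin N, (t : ℕ) ≤ (j : ℕ) + v ∧ (j : ℕ) < (t : ℕ) → x j = x' j) →
    (∀ j : Fin (N + 1), (t : ℕ) ≤ (j : ℕ) + v ∧ (j : ℕ) + u ≤ (t : ℕ) → s j = s' j) →
    (∀ j : Fin N, (j : ℕ) + u + 1 ≤ (t : ℕ) → y j = y' j) →
    src.pol t x s y = src.pol t x' s' y'

/-- `Σ_{t=1}^N I(X^t, S_0^{t-v-1}; Y_t | Y^{t-1})` under the joint law of
the source (state window omitted/truncated when `t - v - 1 < 0`). -/
def objFull {N u : ℕ} (v : ℕ) (ch : NCFSC X S Y) (src : Source X S Y N u) : ℝ :=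
  ∑ t : Fin N,
    condMI (jointP ch src)
      (fun ω : Traj X S Y N =>
        ((fun j : {j : Fin N // (j : ℕ) ≤ (t : ℕ)} => ω.1 j.1),
          fun j : {j : Fin (N + 1) // (j : ℕ) + v ≤ (t : ℕ)} => ω.2.1 j.1))
      (fun ω => ω.2.2 t)
      (fun ω => fun j : {j : Fin N // (j : ℕ) < (t : ℕ)} => ω.2.2 j.1)

/-- `Σ_{t=1}^N I(X_{t-v}^t, S_{t-v-1}; Y_t | Y^{t-1})` under the joint law
of the source (windows truncated for small `t`; the singleton state window
`S_{t-v-1}` is encoded by the condition `j + v = t - 1` in 0-based time and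
is empty for `t ≤ v`). -/
def objWin {N u : ℕ} (v : ℕ) (ch : NCFSC X S Y) (src : Source X S Y N u) : ℝ :=
  ∑ t : Fin N,
    condMI (jointP ch src)
      (fun ω : Traj X S Y N =>
        ((fun j : {j : Fin N // (t : ℕ) ≤ (j : ℕ) + v ∧ (j : ℕ) ≤ (t : ℕ)} => ω.1 j.1),
          fun j : {j : Fin (N + 1) // (j : ℕ) + v = (t : ℕ)} => ω.2.1 j.1))
      (fun ω => ω.2.2 t)
      (fun ω => fun j : {j : Fin N // (j : ℕ) < (t : ℕ)} => ω.2.2 j.1)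

/-- Directed information `I(X^N → Y^N) = Σ_{t=1}^N I(X^t; Y_t | Y^{t-1})`. -/
def directedInfo {N u : ℕ} (ch : NCFSC X S Y) (src : Source X S Y N u) : ℝ :=
  ∑ t : Fin N,
    condMI (jointP ch src)
      (fun ω : Traj X S Y N => fun j : {j : Fin N // (j : ℕ) ≤ (t : ℕ)} => ω.1 j.1)
      (fun ω => ω.2.2 t)
      (fun ω => fun j : {j : Fin N // (j : ℕ) < (t : ℕ)} => ω.2.2 j.1)

/-- The a posteriori vectors `α_{t-1}(y^{t-u-1})` and `α_{t-1}(ỹ^{t-u-1})`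
(at the 1-based time `(t:ℕ)+1`) induced by the two output histories `yh`
and `yh'` coincide: for all window values `(x_{t-v}^{t-1}, s_{t-v-1}^{t-u-1})`
the two a posteriori probabilities agree. -/
def alphaWinEq {N u : ℕ} (v : ℕ) (ch : NCFSC X S Y) (src : Source X S Y N u)
    (t : Fin N) (yh yh' : Fin N → Y) : Prop :=
  ∀ (xf : Fin N → X) (sf : Fin (N + 1) → S),
    condPr (jointP ch src)
        {ω : Traj X S Y N |
          (∀ j : Fin N, (t : ℕ) ≤ (j : ℕ) + v ∧ (j : ℕ) < (t : ℕ) → ω.1 j = xf j) ∧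
            ∀ j : Fin (N + 1), (t : ℕ) ≤ (j : ℕ) + v ∧ (j : ℕ) + u ≤ (t : ℕ) → ω.2.1 j = sf j}
        {ω : Traj X S Y N | ∀ j : Fin N, (j : ℕ) + u + 1 ≤ (t : ℕ) → ω.2.2 j = yh j} =
      condPr (jointP ch src)
        {ω : Traj X S Y N |
          (∀ j : Fin N, (t : ℕ) ≤ (j : ℕ) + v ∧ (j : ℕ) < (t : ℕ) → ω.1 j = xf j) ∧
            ∀ j : Fin (N + 1), (t : ℕ) ≤ (j : ℕ) + v ∧ (j : ℕ) + u ≤ (t : ℕ) → ω.2.1 j = sf j}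
        {ω : Traj X S Y N | ∀ j : Fin N, (j : ℕ) + u + 1 ≤ (t : ℕ) → ω.2.2 j = yh' j}

/-- The set `𝒫'_v(u,u)`: the policy at each time gives the same value on
any two positive-probability output histories inducing the same a
posteriori vector. -/
def AlphaPolicy {N u : ℕ} (v : ℕ) (ch : NCFSC X S Y) (src : Source X S Y N u) : Prop :=
  ∀ (t : Fin N) (yh yh' : Fin N → Y),
    0 < prE (jointP ch src)
        {ω : Traj X S Y N | ∀ j : Fin N, (j : ℕ) + u + 1 ≤ (t : ℕ) → ω.2.2 j = yh j} →
    0 < prE (jointP ch src)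
        {ω : Traj X S Y N | ∀ j : Fin N, (j : ℕ) + u + 1 ≤ (t : ℕ) → ω.2.2 j = yh' j} →
    alphaWinEq v ch src t yh yh' →
    ∀ (xf : Fin N → X) (sf : Fin (N + 1) → S) (a : X),
      src.pol t xf sf yh a = src.pol t xf sf yh' a


/-! ### Auxiliary machinery for the proof of Statement 3 -/

section Aux

lemma prE_nonneg {Ω : Type} [Fintype Ω] (p : Ω → ℝ) (hp : ∀ ω, 0 ≤ p ω) (E : Set Ω) :
    0 ≤ prE p E :=
  Finset.sum_nonneg fun ω _ => Set.indicator_nonneg (fun x _ => hp x) ω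

lemma prE_mono {Ω : Type} [Fintype Ω] (p : Ω → ℝ) (hp : ∀ ω, 0 ≤ p ω) {E F : Set Ω}
    (h : E ⊆ F) : prE p E ≤ prE p F := by
  refine Finset.sum_le_sum fun ω _ => ?_
  classical
  rw [Set.indicator_apply, Set.indicator_apply]
  by_cases hE : ω ∈ E
  · rw [if_pos hE, if_pos (h hE)]
  · rw [if_neg hE]
    by_cases hF : ω ∈ F
    · rw [if_pos hF]; exact hp ω
    · rw [if_neg hF]

lemma condMI_eq_zero {Ω A B C : Type} [Fintype Ω] [Fintype A] [Fintype B] [Fintype C]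
    (p : Ω → ℝ) (hp : ∀ ω, 0 ≤ p ω) (fA : Ω → A) (fB : Ω → B) (fC : Ω → C)
    (h : ∀ a b c, prE p {ω | fA ω = a ∧ fB ω = b ∧ fC ω = c} * prE p {ω | fC ω = c}
      = prE p {ω | fA ω = a ∧ fC ω = c} * prE p {ω | fB ω = b ∧ fC ω = c}) :
    condMI p fA fB fC = 0 := by
  unfold condMI
  refine Finset.sum_eq_zero fun a _ => Finset.sum_eq_zero fun b _ =>
    Finset.sum_eq_zero fun c _ => ?_
  set pabc := prE p {ω | fA ω = a ∧ fB ω = b ∧ fC ω = c} with hpabc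
  rcases eq_or_lt_of_le (prE_nonneg p hp {ω | fA ω = a ∧ fB ω = b ∧ fC ω = c}) with h0 | h0
  · rw [hpabc, ← h0, zero_mul]
  · have hsub1 : {ω | fA ω = a ∧ fB ω = b ∧ fC ω = c} ⊆ {ω | fA ω = a ∧ fC ω = c} :=
      fun ω hω => ⟨hω.1, hω.2.2⟩
    have hsub2 : {ω | fA ω = a ∧ fB ω = b ∧ fC ω = c} ⊆ {ω | fB ω = b ∧ fC ω = c} :=
      fun ω hω => ⟨hω.2.1, hω.2.2⟩
    have hsub3 : {ω | fA ω = a ∧ fB ω = b ∧ fC ω = c} ⊆ {ω | fC ω = c} :=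
      fun ω hω => hω.2.2
    have hac : 0 < prE p {ω | fA ω = a ∧ fC ω = c} := lt_of_lt_of_le h0 (prE_mono p hp hsub1)
    have hbc : 0 < prE p {ω | fB ω = b ∧ fC ω = c} := lt_of_lt_of_le h0 (prE_mono p hp hsub2)
    have hc : 0 < prE p {ω | fC ω = c} := lt_of_lt_of_le h0 (prE_mono p hp hsub3)
    have e1 : {ω | fA ω = a ∧ fB ω = b} ∩ {ω | fC ω = c}
        = {ω | fA ω = a ∧ fB ω = b ∧ fC ω = c} := by
      ext ω; simp [Set.mem_setOf_eq, and_assoc]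
    have e2 : {ω | fA ω = a} ∩ {ω | fC ω = c} = {ω | fA ω = a ∧ fC ω = c} := rfl
    have e3 : {ω | fB ω = b} ∩ {ω | fC ω = c} = {ω | fB ω = b ∧ fC ω = c} := rfl
    have : condPr p {ω | fA ω = a ∧ fB ω = b} {ω | fC ω = c} /
        (condPr p {ω | fA ω = a} {ω | fC ω = c} *
          condPr p {ω | fB ω = b} {ω | fC ω = c}) = 1 := by
      unfold condPr
      rw [e1, e2, e3, ← hpabc]
      field_simp
      nlinarith [h a b c]
    rw [this, Real.log_one, mul_zero]

lemma prE_split_B {Ω B : Type} [Fintype Ω] [Fintype B] (p : Ω → ℝ) (fB : Ω → B) (E : Set Ω) :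
    prE p E = ∑ b : B, prE p (E ∩ {ω | fB ω = b}) := by
  classical
  unfold prE
  rw [Finset.sum_comm]
  refine Finset.sum_congr rfl fun ω _ => ?_
  rw [Set.indicator_apply]
  by_cases hE : ω ∈ E
  · rw [if_pos hE, Finset.sum_eq_single (fB ω)]
    · simp [Set.indicator_apply, hE]
    · intro b _ hb
      simp [Set.indicator_apply, hE, Ne.symm hb]
    · simp
  · rw [if_neg hE]
    refine (Finset.sum_eq_zero fun b _ => ?_).symm
    simp [Set.indicator_apply, hE]

variable {X S Y : Type} [Fintype X] [Fintype S] [Fintype Y] {N u : ℕ}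

open Classical in
/-- Real-valued indicator of a proposition. -/
def ind (P : Prop) : ℝ := if P then 1 else 0

lemma ind_pos {P : Prop} (h : P) : ind P = 1 := by unfold ind; rw [if_pos h]
lemma ind_neg {P : Prop} (h : ¬P) : ind P = 0 := by unfold ind; rw [if_neg h]
lemma ind_nonneg (P : Prop) : 0 ≤ ind P := by
  unfold ind; split <;> norm_num
lemma ind_congr {P Q : Prop} (h : P ↔ Q) : ind P = ind Q := by
  by_cases hP : P
  · rw [ind_pos hP, ind_pos (h.mp hP)]
  · rw [ind_neg hP, ind_neg (fun hq => hP (h.mpr hq))]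
lemma ind_and (P Q : Prop) : ind (P ∧ Q) = ind P * ind Q := by
  by_cases hP : P
  · by_cases hQ : Q
    · rw [ind_pos hP, ind_pos hQ, ind_pos ⟨hP, hQ⟩, one_mul]
    · rw [ind_neg hQ, ind_neg (fun h => hQ h.2), mul_zero]
  · rw [ind_neg hP, ind_neg (fun h => hP h.1), zero_mul]

lemma sum_ind_collapse {α : Type} [Fintype α] (x : α) (f : α → ℝ) :
    (∑ a : α, ind (x = a) * f a) = f x := by
  rw [Fintype.sum_eq_single x (fun b hb => by rw [ind_neg (fun h => hb h.symm), zero_mul]),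
    ind_pos rfl, one_mul]

/-- The one-step factor of the joint pmf. -/
def Ffac (ch : NCFSC X S Y) (src : Source X S Y N u) (i : Fin N) (ω : Traj X S Y N) : ℝ :=
  src.pol i ω.1 ω.2.1 ω.2.2 (ω.1 i) *
    ch.W (ω.2.2 i) (ω.2.1 i.succ) (ω.1 i) (ω.2.1 i.castSucc)

lemma Ffac_congr (ch : NCFSC X S Y) (src : Source X S Y N u) (i : Fin N)
    (ω ω' : Traj X S Y N)
    (hx : ∀ j : Fin N, (j : ℕ) ≤ (i : ℕ) → ω.1 j = ω'.1 j)
    (hs : ∀ j : Fin (N + 1), (j : ℕ) ≤ (i : ℕ) + 1 → ω.2.1 j = ω'.2.1 j)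
    (hy : ∀ j : Fin N, (j : ℕ) ≤ (i : ℕ) → ω.2.2 j = ω'.2.2 j) :
    Ffac ch src i ω = Ffac ch src i ω' := by
  unfold Ffac
  rw [src.causal i ω.1 ω'.1 ω.2.1 ω'.2.1 ω.2.2 ω'.2.2
      (fun j hj => hx j (le_of_lt hj))
      (fun j hj => hs j (by omega))
      (fun j hj => hy j (by omega)),
    hx i le_rfl, hy i le_rfl, hs i.succ (by simp),
    hs i.castSucc (by simp)]

def Match (k : ℕ) (base ω : Traj X S Y N) : Prop :=
  (∀ j : Fin N, (j : ℕ) < k → ω.1 j = base.1 j) ∧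
    (∀ j : Fin (N + 1), (j : ℕ) ≤ k → ω.2.1 j = base.2.1 j) ∧
    (∀ j : Fin N, (j : ℕ) < k → ω.2.2 j = base.2.2 j)

lemma suffixSum (ch : NCFSC X S Y) (src : Source X S Y N u) (d : ℕ) :
    ∀ (k : ℕ), k + d = N → ∀ base : Traj X S Y N,
    (∑ ω : Traj X S Y N, ind (Match k base ω) *
        ∏ i ∈ Finset.univ.filter (fun i : Fin N => k ≤ (i : ℕ)), Ffac ch src i ω) = 1 := by
  induction d with
  | zero =>
    intro k hk base
    have hfilter : (Finset.univ.filter (fun i : Fin N => k ≤ (i : ℕ))) = ∅ :=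
      Finset.filter_false_of_mem (fun i _ => by have := i.isLt; omega)
    have hiff : ∀ ω : Traj X S Y N, Match k base ω ↔ ω = base := by
      intro ω
      constructor
      · rintro ⟨h1, h2, h3⟩
        refine Prod.ext ?_ (Prod.ext ?_ ?_)
        · funext j; exact h1 j (by have := j.isLt; omega)
        · funext j; exact h2 j (by have := j.isLt; omega)
        · funext j; exact h3 j (by have := j.isLt; omega)
      · rintro rfl
        exact ⟨fun _ _ => rfl, fun _ _ => rfl, fun _ _ => rfl⟩
    simp only [hfilter, Finset.prod_empty, mul_one]
    rw [Finset.sum_congr rfl (fun ω _ => ind_congr (hiff ω)),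
      Fintype.sum_eq_single base (fun ω hω => ind_neg hω), ind_pos rfl]
  | succ d ih =>
    intro k hk base
    have hkN : k < N := by omega
    set kf : Fin N := ⟨k, hkN⟩ with hkf
    have hkfv : (kf : ℕ) = k := rfl
    have hins : (Finset.univ.filter (fun i : Fin N => k ≤ (i : ℕ)))
        = insert kf (Finset.univ.filter (fun i : Fin N => k + 1 ≤ (i : ℕ))) := by
      ext i
      simp only [Finset.mem_filter, Finset.mem_univ, true_and, Finset.mem_insert]
      constructor
      · intro h
        rcases eq_or_lt_of_le h with h' | h'
        · left; exact Fin.ext h'.symm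
        · right; omega
      · rintro (rfl | h) <;> omega
    have hnotmem : kf ∉ Finset.univ.filter (fun i : Fin N => k + 1 ≤ (i : ℕ)) := by
      simp [hkf]
    set base' : X → Y → S → Traj X S Y N := fun a b c =>
      (Function.update base.1 kf a,
        Function.update base.2.1 kf.succ c,
        Function.update base.2.2 kf b) with hbase'
    have hb1 : ∀ a b c, (base' a b c).1 = Function.update base.1 kf a := fun _ _ _ => rfl
    have hb2 : ∀ a b c, (base' a b c).2.1 = Function.update base.2.1 kf.succ c := fun _ _ _ => rfl
    have hb3 : ∀ a b c, (base' a b c).2.2 = Function.update base.2.2 kf b := fun _ _ _ => rfl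
    have hMatch : ∀ (ω : Traj X S Y N) (a b c),
        (Match k base ω ∧ ω.1 kf = a ∧ ω.2.2 kf = b ∧ ω.2.1 kf.succ = c)
          ↔ Match (k + 1) (base' a b c) ω := by
      intro ω a b c
      constructor
      · rintro ⟨⟨h1, h2, h3⟩, hx, hy, hs⟩
        refine ⟨fun j hj => ?_, fun j hj => ?_, fun j hj => ?_⟩
        · rw [hb1, Function.update_apply]
          by_cases hje : j = kf
          · subst hje; rw [if_pos rfl]; exact hx
          · rw [if_neg hje]
            exact h1 j (by
              have : (j : ℕ) ≠ k := fun hc => hje (Fin.ext hc)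
              omega)
        · rw [hb2, Function.update_apply]
          by_cases hje : j = kf.succ
          · subst hje; rw [if_pos rfl]; exact hs
          · rw [if_neg hje]
            exact h2 j (by
              have : (j : ℕ) ≠ k + 1 := fun hc => hje (Fin.ext (by simp [hc, hkfv]))
              omega)
        · rw [hb3, Function.update_apply]
          by_cases hje : j = kf
          · subst hje; rw [if_pos rfl]; exact hy
          · rw [if_neg hje]
            exact h3 j (by
              have : (j : ℕ) ≠ k := fun hc => hje (Fin.ext hc)
              omega)
      · rintro ⟨h1, h2, h3⟩
        have hx : ω.1 kf = a := by
          have := h1 kf (by omega)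
          rw [hb1, Function.update_self] at this
          exact this
        have hy : ω.2.2 kf = b := by
          have := h3 kf (by omega)
          rw [hb3, Function.update_self] at this
          exact this
        have hs : ω.2.1 kf.succ = c := by
          have := h2 kf.succ (by simp [Fin.val_succ, hkfv]) 
          rw [hb2, Function.update_self] at this
          exact this
        refine ⟨⟨fun j hj => ?_, fun j hj => ?_, fun j hj => ?_⟩, hx, hy, hs⟩
        · have := h1 j (by omega)
          rw [hb1, Function.update_apply] at this
          rw [this, if_neg (fun hc : j = kf => by rw [hc, hkfv] at hj; omega)]
        · have := h2 j (by omega)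
          rw [hb2, Function.update_apply] at this
          rw [this, if_neg (fun hc : j = kf.succ => by
            rw [hc] at hj; simp [Fin.val_succ, hkfv] at hj)]
        · have := h3 j (by omega)
          rw [hb3, Function.update_apply] at this
          rw [this, if_neg (fun hc : j = kf => by rw [hc, hkfv] at hj; omega)]
    have hsplit : ∀ (ω : Traj X S Y N) a b c,
        ind (Match (k + 1) (base' a b c) ω)
          = ind (ω.1 kf = a) * (ind (ω.2.2 kf = b) *
              (ind (ω.2.1 kf.succ = c) * ind (Match k base ω))) := by
      intro ω a b c
      rw [← ind_congr (hMatch ω a b c),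
        ind_congr (show (Match k base ω ∧ ω.1 kf = a ∧ ω.2.2 kf = b ∧ ω.2.1 kf.succ = c)
          ↔ (ω.1 kf = a ∧ (ω.2.2 kf = b ∧ (ω.2.1 kf.succ = c ∧ Match k base ω))) by tauto),
        ind_and, ind_and, ind_and]
    have point : ∀ ω : Traj X S Y N,
        (ind (Match k base ω) *
            ∏ i ∈ Finset.univ.filter (fun i : Fin N => k ≤ (i : ℕ)), Ffac ch src i ω)
        = ∑ a : X, ∑ b : Y, ∑ c : S,
            ind (Match (k + 1) (base' a b c) ω) *
              (Ffac ch src kf ω *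
                ∏ i ∈ Finset.univ.filter (fun i : Fin N => k + 1 ≤ (i : ℕ)), Ffac ch src i ω) := by
      intro ω
      rw [hins, Finset.prod_insert hnotmem]
      simp only [hsplit, mul_assoc, ← Finset.mul_sum, sum_ind_collapse]
    have point2 : ∀ a b c (ω : Traj X S Y N),
        ind (Match (k + 1) (base' a b c) ω) *
            (Ffac ch src kf ω *
              ∏ i ∈ Finset.univ.filter (fun i : Fin N => k + 1 ≤ (i : ℕ)), Ffac ch src i ω)
        = Ffac ch src kf (base' a b c) *
            (ind (Match (k + 1) (base' a b c) ω) *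
              ∏ i ∈ Finset.univ.filter (fun i : Fin N => k + 1 ≤ (i : ℕ)), Ffac ch src i ω) := by
      intro a b c ω
      by_cases hP : Match (k + 1) (base' a b c) ω
      · rw [ind_pos hP, one_mul, one_mul]
        rw [Ffac_congr ch src kf ω (base' a b c)
          (fun j hj => hP.1 j (by omega))
          (fun j hj => hP.2.1 j (by omega))
          (fun j hj => hP.2.2 j (by omega))]
      · rw [ind_neg hP, zero_mul, zero_mul, mul_zero]
    have hval : ∀ a b c, Ffac ch src kf (base' a b c)
        = src.pol kf base.1 base.2.1 base.2.2 a *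
            (ch.P b a (base.2.1 kf.castSucc) * ch.Q c (base.2.1 kf.castSucc)) := by
      intro a b c
      have hpol : src.pol kf (base' a b c).1 (base' a b c).2.1 (base' a b c).2.2
          = src.pol kf base.1 base.2.1 base.2.2 := by
        apply src.causal
        · intro j hj
          rw [hb1, Function.update_apply,
            if_neg (fun hc : j = kf => by rw [hc, hkfv] at hj; omega)]
        · intro j hj
          rw [hb2, Function.update_apply,
            if_neg (fun hc : j = kf.succ => by
              rw [hc] at hj; simp [Fin.val_succ, hkfv] at hj; omega)]
        · intro j hj
          rw [hb3, Function.update_apply,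
            if_neg (fun hc : j = kf => by rw [hc, hkfv] at hj; omega)]
      have hx : (base' a b c).1 kf = a := by rw [hb1, Function.update_self]
      have hy : (base' a b c).2.2 kf = b := by rw [hb3, Function.update_self]
      have hs1 : (base' a b c).2.1 kf.succ = c := by rw [hb2, Function.update_self]
      have hs2 : (base' a b c).2.1 kf.castSucc = base.2.1 kf.castSucc := by
        rw [hb2, Function.update_apply, if_neg (fun hc : kf.castSucc = kf.succ => by
          have : (kf.castSucc : ℕ) = (kf.succ : ℕ) := by rw [hc]
          simp at this)]
      show src.pol kf (base' a b c).1 (base' a b c).2.1 (base' a b c).2.2 ((base' a b c).1 kf) *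
          ch.W ((base' a b c).2.2 kf) ((base' a b c).2.1 kf.succ) ((base' a b c).1 kf)
            ((base' a b c).2.1 kf.castSucc) = _
      rw [hpol, hx, hy, hs1, hs2]
      rfl
    calc (∑ ω : Traj X S Y N, ind (Match k base ω) *
            ∏ i ∈ Finset.univ.filter (fun i : Fin N => k ≤ (i : ℕ)), Ffac ch src i ω)
        = ∑ ω : Traj X S Y N, ∑ a : X, ∑ b : Y, ∑ c : S,
            ind (Match (k + 1) (base' a b c) ω) *
              (Ffac ch src kf ω *
                ∏ i ∈ Finset.univ.filter (fun i : Fin N => k + 1 ≤ (i : ℕ)), Ffac ch src i ω) :=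
          Finset.sum_congr rfl fun ω _ => point ω
      _ = ∑ a : X, ∑ ω : Traj X S Y N, ∑ b : Y, ∑ c : S, _ := Finset.sum_comm
      _ = ∑ a : X, ∑ b : Y, ∑ ω : Traj X S Y N, ∑ c : S, _ :=
          Finset.sum_congr rfl fun a _ => Finset.sum_comm
      _ = ∑ a : X, ∑ b : Y, ∑ c : S, ∑ ω : Traj X S Y N,
            ind (Match (k + 1) (base' a b c) ω) *
              (Ffac ch src kf ω *
                ∏ i ∈ Finset.univ.filter (fun i : Fin N => k + 1 ≤ (i : ℕ)), Ffac ch src i ω) :=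
          Finset.sum_congr rfl fun a _ => Finset.sum_congr rfl fun b _ => Finset.sum_comm
      _ = ∑ a : X, ∑ b : Y, ∑ c : S, Ffac ch src kf (base' a b c) := by
          refine Finset.sum_congr rfl fun a _ => Finset.sum_congr rfl fun b _ =>
            Finset.sum_congr rfl fun c _ => ?_
          rw [Finset.sum_congr rfl fun ω _ => point2 a b c ω, ← Finset.mul_sum,
            ih (k + 1) (by omega) (base' a b c), mul_one]
      _ = 1 := by
          simp only [hval, ← Finset.mul_sum, ch.Q_sum, mul_one, ch.P_sum, src.sum_one]


section BaseTraj

variable (v : ℕ) (t : Fin N)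

/-- Clamped input sequence built from the `a`- and `c`-components. -/
def baseX (x0 : X) (af : {j : Fin N // (j : ℕ) + v + 1 ≤ (t : ℕ)} → X)
    (cf : {j : Fin N // (t : ℕ) ≤ (j : ℕ) + v ∧ (j : ℕ) ≤ (t : ℕ)} → X) : Fin N → X := fun j =>
  if h : (j : ℕ) + v + 1 ≤ (t : ℕ) then af ⟨j, h⟩
  else if h2 : (t : ℕ) ≤ (j : ℕ) + v ∧ (j : ℕ) ≤ (t : ℕ) then cf ⟨j, h2⟩ else x0

/-- Clamped state sequence. -/
def baseS (s0 : S) (htv : v + 1 ≤ (t : ℕ))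
    (af : {j : Fin (N + 1) // (j : ℕ) + v + 1 ≤ (t : ℕ)} → S) (cs : S)
    (m : Fin (v + 1) → S) : Fin (N + 1) → S := fun j =>
  if h : (j : ℕ) + v + 1 ≤ (t : ℕ) then af ⟨j, h⟩
  else if h2 : (j : ℕ) = (t : ℕ) - v then cs
  else if h3 : (j : ℕ) ≤ (t : ℕ) + 1 then m ⟨(j : ℕ) - ((t : ℕ) - v + 1), by omega⟩ else s0

/-- Clamped output sequence. -/
def baseY (y0 : Y) (b : Y) (cy : {j : Fin N // (j : ℕ) < (t : ℕ)} → Y) : Fin N → Y := fun j =>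
  if (j : ℕ) = (t : ℕ) then b else if h : (j : ℕ) < (t : ℕ) then cy ⟨j, h⟩ else y0

lemma baseX_high (x0 : X) (af af' cf) (j : Fin N) (h : (t : ℕ) ≤ (j : ℕ) + v) :
    baseX v t x0 af cf j = baseX v t x0 af' cf j := by
  unfold baseX
  rw [dif_neg (show ¬((j : ℕ) + v + 1 ≤ (t : ℕ)) by omega),
    dif_neg (show ¬((j : ℕ) + v + 1 ≤ (t : ℕ)) by omega)]

lemma baseS_low (s0 : S) (htv : v + 1 ≤ (t : ℕ)) (af cs) (m m' : Fin (v + 1) → S)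
    (j : Fin (N + 1)) (h : (j : ℕ) + v ≤ (t : ℕ)) :
    baseS v t s0 htv af cs m j = baseS v t s0 htv af cs m' j := by
  unfold baseS
  by_cases h1 : (j : ℕ) + v + 1 ≤ (t : ℕ)
  · rw [dif_pos h1, dif_pos h1]
  · rw [dif_neg h1, dif_neg h1, dif_pos (by omega : (j : ℕ) = (t : ℕ) - v),
      dif_pos (by omega : (j : ℕ) = (t : ℕ) - v)]

lemma baseS_high (s0 : S) (htv : v + 1 ≤ (t : ℕ)) (af af' cs) (m : Fin (v + 1) → S)
    (j : Fin (N + 1)) (h : (t : ℕ) ≤ (j : ℕ) + v) :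
    baseS v t s0 htv af cs m j = baseS v t s0 htv af' cs m j := by
  unfold baseS
  rw [dif_neg (show ¬((j : ℕ) + v + 1 ≤ (t : ℕ)) by omega),
    dif_neg (show ¬((j : ℕ) + v + 1 ≤ (t : ℕ)) by omega)]

lemma baseY_low (y0 : Y) (b b' : Y) (cy) (j : Fin N) (h : (j : ℕ) < (t : ℕ)) :
    baseY t y0 b cy j = baseY t y0 b' cy j := by
  unfold baseY
  rw [if_neg (by omega), if_neg (by omega)]

end BaseTraj

section PartFns

def polpart (src : Source X S Y N u) (i : Fin N) (ω : Traj X S Y N) : ℝ :=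
  src.pol i ω.1 ω.2.1 ω.2.2 (ω.1 i)

def wpart (ch : NCFSC X S Y) (i : Fin N) (ω : Traj X S Y N) : ℝ :=
  ch.W (ω.2.2 i) (ω.2.1 i.succ) (ω.1 i) (ω.2.1 i.castSucc)

lemma Ffac_eq (ch : NCFSC X S Y) (src : Source X S Y N u) (i : Fin N) (ω : Traj X S Y N) :
    Ffac ch src i ω = polpart src i ω * wpart ch i ω := rfl

lemma prE_eq_sum_ind {Ω : Type} [Fintype Ω] (p : Ω → ℝ) (E : Set Ω) :
    prE p E = ∑ ω : Ω, ind (ω ∈ E) * p ω := by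
  classical
  unfold prE
  refine Finset.sum_congr rfl fun ω _ => ?_
  rw [Set.indicator_apply]
  by_cases h : ω ∈ E
  · rw [if_pos h, ind_pos h, one_mul]
  · rw [if_neg h, ind_neg h, zero_mul]


end PartFns

end Aux

/-- **key lemma for Theorem 1.** For a non-controllable FSC
with a source in `𝒫(u,u)`, `u ≥ v ≥ 0`, and every time `t ∈ {v+2,…,N}`
(0-based: `v + 1 ≤ (t:ℕ)`),
`I( (X^{t-v-1}, S_0^{t-v-2}) ; Y_t | (Y^{t-1}, X_{t-v}^t, S_{t-v-1}) ) = 0`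
under the joint law induced by the source. -/
theorem statement3 {X S Y : Type} [Fintype X] [Fintype S] [Fintype Y] {N u : ℕ}
    (ch : NCFSC X S Y) (v : ℕ) (hvu : v ≤ u) (src : Source X S Y N u)
    (t : Fin N) (htv : v + 1 ≤ (t : ℕ)) :
    condMI (jointP ch src)
      (fun ω : Traj X S Y N =>
        ((fun j : {j : Fin N // (j : ℕ) + v + 1 ≤ (t : ℕ)} => ω.1 j.1),
          fun j : {j : Fin (N + 1) // (j : ℕ) + v + 1 ≤ (t : ℕ)} => ω.2.1 j.1))
      (fun ω => ω.2.2 t)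
      (fun ω =>
        ((fun j : {j : Fin N // (j : ℕ) < (t : ℕ)} => ω.2.2 j.1),
          (fun j : {j : Fin N // (t : ℕ) ≤ (j : ℕ) + v ∧ (j : ℕ) ≤ (t : ℕ)} => ω.1 j.1),
          ω.2.1 ⟨(t : ℕ) - v, by have := t.isLt; omega⟩)) = 0 := by
  classical
  have htN : (t : ℕ) < N := t.isLt
  have hpnn : ∀ ω : Traj X S Y N, 0 ≤ jointP ch src ω := fun ω =>
    mul_nonneg (ch.init_nonneg _) (Finset.prod_nonneg fun i _ =>
      mul_nonneg (src.nonneg _ _ _ _ _) (mul_nonneg (ch.P_nonneg _ _ _) (ch.Q_nonneg _ _)))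
  apply condMI_eq_zero _ hpnn
  rcases isEmpty_or_nonempty X with hX | hX
  · intro a b c
    have hz : ∀ E : Set (Traj X S Y N), prE (jointP ch src) E = 0 := fun E => by
      unfold prE; exact Finset.sum_eq_zero fun ω _ => hX.elim (ω.1 t)
    simp only [hz]
  rcases isEmpty_or_nonempty S with hS | hS
  · intro a b c
    have hz : ∀ E : Set (Traj X S Y N), prE (jointP ch src) E = 0 := fun E => by
      unfold prE; exact Finset.sum_eq_zero fun ω _ => hS.elim (ω.2.1 0)
    simp only [hz]
  rcases isEmpty_or_nonempty Y with hY | hY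
  · intro a b c
    have hz : ∀ E : Set (Traj X S Y N), prE (jointP ch src) E = 0 := fun E => by
      unfold prE; exact Finset.sum_eq_zero fun ω _ => hY.elim (ω.2.2 t)
    simp only [hz]
  obtain ⟨x0⟩ := hX
  obtain ⟨s0⟩ := hS
  obtain ⟨y0⟩ := hY
  -- abbreviations for the window types
  set AT := ({j : Fin N // (j : ℕ) + v + 1 ≤ (t : ℕ)} → X) ×
      ({j : Fin (N + 1) // (j : ℕ) + v + 1 ≤ (t : ℕ)} → S) with hAT
  set CT := ({j : Fin N // (j : ℕ) < (t : ℕ)} → Y) ×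
      ({j : Fin N // (t : ℕ) ≤ (j : ℕ) + v ∧ (j : ℕ) ≤ (t : ℕ)} → X) × S with hCT
  -- the clamped trajectory
  set Bse : AT → Y → CT → (Fin (v + 1) → S) → Traj X S Y N := fun a b c m =>
    (baseX v t x0 a.1 c.2.1, baseS v t s0 htv a.2 c.2.2 m, baseY t y0 b c.1) with hBse
  set lowF := Finset.univ.filter (fun i : Fin N => (i : ℕ) ≤ (t : ℕ)) with hlowF
  set Fv : AT → CT → ℝ := fun a c =>
    ch.init (baseS v t s0 htv a.2 c.2.2 (fun _ => s0) 0) *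
      ((∏ i ∈ lowF, polpart src i (Bse a y0 c (fun _ => s0))) *
        ∏ i ∈ lowF.filter (fun i : Fin N => (i : ℕ) + v + 1 ≤ (t : ℕ)),
          wpart ch i (Bse a y0 c (fun _ => s0))) with hFv
  set Gv : Y → CT → ℝ := fun b c => ∑ m : Fin (v + 1) → S,
      ∏ i ∈ lowF.filter (fun i : Fin N => ¬((i : ℕ) + v + 1 ≤ (t : ℕ))),
        wpart ch i (Bse (fun _ => x0, fun _ => s0) b c m) with hGv
  -- the key marginal computation
  have key : ∀ (a : AT) (b : Y) (c : CT), prE (jointP ch src)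
      {ω : Traj X S Y N |
        ((fun j : {j : Fin N // (j : ℕ) + v + 1 ≤ (t : ℕ)} => ω.1 j.1),
          fun j : {j : Fin (N + 1) // (j : ℕ) + v + 1 ≤ (t : ℕ)} => ω.2.1 j.1) = a ∧
        ω.2.2 t = b ∧
        ((fun j : {j : Fin N // (j : ℕ) < (t : ℕ)} => ω.2.2 j.1),
          (fun j : {j : Fin N // (t : ℕ) ≤ (j : ℕ) + v ∧ (j : ℕ) ≤ (t : ℕ)} => ω.1 j.1),
          ω.2.1 ⟨(t : ℕ) - v, by have := t.isLt; omega⟩) = c}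
      = Fv a c * Gv b c := by
    intro a b c
    have hwidx : ∀ r : Fin (v + 1), (t : ℕ) - v + 1 + (r : ℕ) < N + 1 := fun r => by
      have := r.isLt; omega
    set EE : Set (Traj X S Y N) := {ω : Traj X S Y N |
        ((fun j : {j : Fin N // (j : ℕ) + v + 1 ≤ (t : ℕ)} => ω.1 j.1),
          fun j : {j : Fin (N + 1) // (j : ℕ) + v + 1 ≤ (t : ℕ)} => ω.2.1 j.1) = a ∧
        ω.2.2 t = b ∧
        ((fun j : {j : Fin N // (j : ℕ) < (t : ℕ)} => ω.2.2 j.1),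
          (fun j : {j : Fin N // (t : ℕ) ≤ (j : ℕ) + v ∧ (j : ℕ) ≤ (t : ℕ)} => ω.1 j.1),
          ω.2.1 ⟨(t : ℕ) - v, by have := t.isLt; omega⟩) = c} with hEE
    -- event membership as a pinning condition
    have hEquiv : ∀ (ω : Traj X S Y N) (m : Fin (v + 1) → S),
        ((ω ∈ EE) ∧ (fun r : Fin (v + 1) =>
            ω.2.1 ⟨(t : ℕ) - v + 1 + (r : ℕ), hwidx r⟩) = m)
          ↔ Match ((t : ℕ) + 1) (Bse a b c m) ω := by
      intro ω m
      constructor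
      · rintro ⟨⟨hA, hB, hC⟩, hW⟩
        have hA1 := congrFun (congrArg Prod.fst hA)
        have hA2 := congrFun (congrArg Prod.snd hA)
        have hC1 := congrFun (congrArg Prod.fst hC)
        have hC23 := congrArg Prod.snd hC
        have hC2 := congrFun (congrArg Prod.fst hC23)
        have hC3 := congrArg Prod.snd hC23
        refine ⟨fun j hj => ?_, fun j hj => ?_, fun j hj => ?_⟩
        · show ω.1 j = baseX v t x0 a.1 c.2.1 j
          unfold baseX
          by_cases h1 : (j : ℕ) + v + 1 ≤ (t : ℕ)
          · rw [dif_pos h1]; exact hA1 ⟨j, h1⟩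
          · rw [dif_neg h1,
              dif_pos (show (t : ℕ) ≤ (j : ℕ) + v ∧ (j : ℕ) ≤ (t : ℕ) by omega)]
            exact hC2 ⟨j, by omega⟩
        · show ω.2.1 j = baseS v t s0 htv a.2 c.2.2 m j
          unfold baseS
          by_cases h1 : (j : ℕ) + v + 1 ≤ (t : ℕ)
          · rw [dif_pos h1]; exact hA2 ⟨j, h1⟩
          · rw [dif_neg h1]
            by_cases h2 : (j : ℕ) = (t : ℕ) - v
            · rw [dif_pos h2]
              have hje : j = (⟨(t : ℕ) - v, by have := t.isLt; omega⟩ : Fin (N + 1)) :=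
                Fin.ext h2
              rw [hje]; exact hC3
            · rw [dif_neg h2, dif_pos (show (j : ℕ) ≤ (t : ℕ) + 1 by omega)]
              have hje : j = (⟨(t : ℕ) - v + 1 + ((j : ℕ) - ((t : ℕ) - v + 1)),
                  by have := t.isLt; omega⟩ : Fin (N + 1)) :=
                Fin.ext (by show (j : ℕ) = (t : ℕ) - v + 1 + ((j : ℕ) - ((t : ℕ) - v + 1)); omega)
              conv_lhs => rw [hje]
              exact congrFun hW ⟨(j : ℕ) - ((t : ℕ) - v + 1), by omega⟩
        · show ω.2.2 j = baseY t y0 b c.1 j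
          unfold baseY
          by_cases h1 : (j : ℕ) = (t : ℕ)
          · rw [if_pos h1]
            have hjt : j = t := Fin.ext h1
            rw [hjt]
            exact hB
          · rw [if_neg h1, dif_pos (show (j : ℕ) < (t : ℕ) by omega)]
            exact hC1 ⟨j, by omega⟩
      · rintro ⟨h1, h2, h3⟩
        refine ⟨⟨?_, ?_, ?_⟩, ?_⟩
        · refine Prod.ext ?_ ?_
          · funext jj
            obtain ⟨j, hjj⟩ := jj
            show ω.1 j = a.1 ⟨j, hjj⟩
            rw [h1 j (by omega)]
            show baseX v t x0 a.1 c.2.1 j = a.1 ⟨j, hjj⟩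
            unfold baseX; rw [dif_pos hjj]
          · funext jj
            obtain ⟨j, hjj⟩ := jj
            show ω.2.1 j = a.2 ⟨j, hjj⟩
            rw [h2 j (by omega)]
            show baseS v t s0 htv a.2 c.2.2 m j = a.2 ⟨j, hjj⟩
            unfold baseS; rw [dif_pos hjj]
        · rw [h3 t (by omega)]
          show baseY t y0 b c.1 t = b
          unfold baseY; rw [if_pos rfl]
        · refine Prod.ext ?_ (Prod.ext ?_ ?_)
          · funext jj
            obtain ⟨j, hjj⟩ := jj
            show ω.2.2 j = c.1 ⟨j, hjj⟩
            rw [h3 j (by omega)]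
            show baseY t y0 b c.1 j = c.1 ⟨j, hjj⟩
            unfold baseY; rw [if_neg (by omega), dif_pos hjj]
          · funext jj
            obtain ⟨j, hjj⟩ := jj
            show ω.1 j = c.2.1 ⟨j, hjj⟩
            rw [h1 j (by omega)]
            show baseX v t x0 a.1 c.2.1 j = c.2.1 ⟨j, hjj⟩
            unfold baseX; rw [dif_neg (by omega), dif_pos hjj]
          · show ω.2.1 ⟨(t : ℕ) - v, by have := t.isLt; omega⟩ = c.2.2
            rw [h2 ⟨(t : ℕ) - v, by have := t.isLt; omega⟩
              (by show (t : ℕ) - v ≤ (t : ℕ) + 1; omega)]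
            show baseS v t s0 htv a.2 c.2.2 m ⟨(t : ℕ) - v, by have := t.isLt; omega⟩ = c.2.2
            unfold baseS
            rw [dif_neg (show ¬((t : ℕ) - v + v + 1 ≤ (t : ℕ)) by omega), dif_pos rfl]
        · funext r
          show ω.2.1 ⟨(t : ℕ) - v + 1 + (r : ℕ), hwidx r⟩ = m r
          rw [h2 ⟨(t : ℕ) - v + 1 + (r : ℕ), hwidx r⟩
            (by show (t : ℕ) - v + 1 + (r : ℕ) ≤ (t : ℕ) + 1; have := r.isLt; omega)]
          show baseS v t s0 htv a.2 c.2.2 m ⟨(t : ℕ) - v + 1 + (r : ℕ), hwidx r⟩ = m r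
          unfold baseS
          rw [dif_neg (show ¬((t : ℕ) - v + 1 + (r : ℕ) + v + 1 ≤ (t : ℕ)) by omega),
            dif_neg (show ¬((t : ℕ) - v + 1 + (r : ℕ) = (t : ℕ) - v) by omega),
            dif_pos (show (t : ℕ) - v + 1 + (r : ℕ) ≤ (t : ℕ) + 1 by have := r.isLt; omega)]
          congr 1
          exact Fin.ext
            (by show (t : ℕ) - v + 1 + (r : ℕ) - ((t : ℕ) - v + 1) = (r : ℕ); omega)
    -- marginalize out everything beyond time t
    have hmarg : ∀ m : Fin (v + 1) → S,
        (∑ ω : Traj X S Y N, ind (Match ((t : ℕ) + 1) (Bse a b c m) ω) * jointP ch src ω)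
          = ch.init ((Bse a b c m).2.1 0) * ∏ i ∈ lowF, Ffac ch src i (Bse a b c m) := by
      intro m
      have hjoint : ∀ ω : Traj X S Y N, jointP ch src ω
          = ch.init (ω.2.1 0) * ((∏ i ∈ lowF, Ffac ch src i ω) *
              ∏ i ∈ Finset.univ.filter (fun i : Fin N => (t : ℕ) + 1 ≤ (i : ℕ)),
                Ffac ch src i ω) := by
        intro ω
        have h1 : (∏ i ∈ lowF, Ffac ch src i ω) *
            (∏ i ∈ Finset.univ.filter (fun i : Fin N => ¬((i : ℕ) ≤ (t : ℕ))),
              Ffac ch src i ω) = ∏ i : Fin N, Ffac ch src i ω := by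
          rw [hlowF]
          exact Finset.prod_filter_mul_prod_filter_not Finset.univ _ _
        have h2 : Finset.univ.filter (fun i : Fin N => ¬((i : ℕ) ≤ (t : ℕ)))
            = Finset.univ.filter (fun i : Fin N => (t : ℕ) + 1 ≤ (i : ℕ)) := by
          ext i; simp only [Finset.mem_filter, Finset.mem_univ, true_and]; omega
        calc jointP ch src ω = ch.init (ω.2.1 0) * ∏ i : Fin N, Ffac ch src i ω := rfl
          _ = _ := by rw [← h1, h2]
      have point : ∀ ω : Traj X S Y N,
          ind (Match ((t : ℕ) + 1) (Bse a b c m) ω) * jointP ch src ω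
          = (ch.init ((Bse a b c m).2.1 0) * ∏ i ∈ lowF, Ffac ch src i (Bse a b c m)) *
              (ind (Match ((t : ℕ) + 1) (Bse a b c m) ω) *
                ∏ i ∈ Finset.univ.filter (fun i : Fin N => (t : ℕ) + 1 ≤ (i : ℕ)),
                  Ffac ch src i ω) := by
        intro ω
        by_cases hM : Match ((t : ℕ) + 1) (Bse a b c m) ω
        · rw [ind_pos hM, one_mul, one_mul, hjoint ω]
          have e1 : ω.2.1 0 = (Bse a b c m).2.1 0 := hM.2.1 0 (by simp)
          have e2 : ∏ i ∈ lowF, Ffac ch src i ω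
              = ∏ i ∈ lowF, Ffac ch src i (Bse a b c m) := by
            refine Finset.prod_congr rfl fun i hi => ?_
            have hi' : (i : ℕ) ≤ (t : ℕ) := by
              rw [hlowF] at hi
              exact (Finset.mem_filter.mp hi).2
            exact Ffac_congr ch src i ω (Bse a b c m)
              (fun j hj => hM.1 j (by omega))
              (fun j hj => hM.2.1 j (by omega))
              (fun j hj => hM.2.2 j (by omega))
          rw [e1, e2, mul_assoc]
        · rw [ind_neg hM, zero_mul, zero_mul, mul_zero]
      rw [Finset.sum_congr rfl fun ω _ => point ω, ← Finset.mul_sum,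
        suffixSum ch src (N - ((t : ℕ) + 1)) ((t : ℕ) + 1) (by omega) (Bse a b c m), mul_one]
    -- factor the truncated product
    have hfact : ∀ m : Fin (v + 1) → S,
        ch.init ((Bse a b c m).2.1 0) * ∏ i ∈ lowF, Ffac ch src i (Bse a b c m)
          = Fv a c * ∏ i ∈ lowF.filter (fun i : Fin N => ¬((i : ℕ) + v + 1 ≤ (t : ℕ))),
              wpart ch i (Bse (fun _ => x0, fun _ => s0) b c m) := by
      intro m
      have hsplit1 : ∏ i ∈ lowF, Ffac ch src i (Bse a b c m)
          = (∏ i ∈ lowF, polpart src i (Bse a b c m)) *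
              ∏ i ∈ lowF, wpart ch i (Bse a b c m) := by
        rw [Finset.prod_congr rfl fun i _ => Ffac_eq ch src i (Bse a b c m),
          Finset.prod_mul_distrib]
      have hsplit2 : ∏ i ∈ lowF, wpart ch i (Bse a b c m)
          = (∏ i ∈ lowF.filter (fun i : Fin N => (i : ℕ) + v + 1 ≤ (t : ℕ)),
              wpart ch i (Bse a b c m)) *
            ∏ i ∈ lowF.filter (fun i : Fin N => ¬((i : ℕ) + v + 1 ≤ (t : ℕ))),
              wpart ch i (Bse a b c m) :=
        (Finset.prod_filter_mul_prod_filter_not lowF _ _).symm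
      have einit : ch.init ((Bse a b c m).2.1 0)
          = ch.init (baseS v t s0 htv a.2 c.2.2 (fun _ => s0) 0) :=
        congrArg ch.init (baseS_low v t s0 htv a.2 c.2.2 m (fun _ => s0) 0
          (by have : ((0 : Fin (N + 1)) : ℕ) = 0 := rfl; omega))
      have epol : ∀ i ∈ lowF, polpart src i (Bse a b c m)
          = polpart src i (Bse a y0 c (fun _ => s0)) := by
        intro i hi
        have hi' : (i : ℕ) ≤ (t : ℕ) := by
          rw [hlowF] at hi
          exact (Finset.mem_filter.mp hi).2
        exact congrFun (src.causal i
          (baseX v t x0 a.1 c.2.1) (baseX v t x0 a.1 c.2.1)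
          (baseS v t s0 htv a.2 c.2.2 m) (baseS v t s0 htv a.2 c.2.2 (fun _ => s0))
          (baseY t y0 b c.1) (baseY t y0 y0 c.1)
          (fun j _ => rfl)
          (fun j hj => baseS_low v t s0 htv a.2 c.2.2 m (fun _ => s0) j (by omega))
          (fun j hj => baseY_low t y0 b y0 c.1 j (by omega))) _
      have ewlow : ∀ i ∈ lowF.filter (fun i : Fin N => (i : ℕ) + v + 1 ≤ (t : ℕ)),
          wpart ch i (Bse a b c m) = wpart ch i (Bse a y0 c (fun _ => s0)) := by
        intro i hi
        have hi' : (i : ℕ) + v + 1 ≤ (t : ℕ) := (Finset.mem_filter.mp hi).2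
        show ch.W (baseY t y0 b c.1 i) (baseS v t s0 htv a.2 c.2.2 m i.succ)
            (baseX v t x0 a.1 c.2.1 i) (baseS v t s0 htv a.2 c.2.2 m i.castSucc)
          = ch.W (baseY t y0 y0 c.1 i) (baseS v t s0 htv a.2 c.2.2 (fun _ => s0) i.succ)
            (baseX v t x0 a.1 c.2.1 i) (baseS v t s0 htv a.2 c.2.2 (fun _ => s0) i.castSucc)
        rw [baseY_low t y0 b y0 c.1 i (by omega),
          baseS_low v t s0 htv a.2 c.2.2 m (fun _ => s0) i.succ
            (by show (i : ℕ) + 1 + v ≤ (t : ℕ); omega),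
          baseS_low v t s0 htv a.2 c.2.2 m (fun _ => s0) i.castSucc
            (by show (i : ℕ) + v ≤ (t : ℕ); omega)]
      have ewhigh : ∀ i ∈ lowF.filter (fun i : Fin N => ¬((i : ℕ) + v + 1 ≤ (t : ℕ))),
          wpart ch i (Bse a b c m)
            = wpart ch i (Bse (fun _ => x0, fun _ => s0) b c m) := by
        intro i hi
        have hi1 : (i : ℕ) ≤ (t : ℕ) := by
          have := (Finset.mem_filter.mp hi).1
          rw [hlowF] at this
          exact (Finset.mem_filter.mp this).2
        have hi2 : ¬((i : ℕ) + v + 1 ≤ (t : ℕ)) := (Finset.mem_filter.mp hi).2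
        show ch.W (baseY t y0 b c.1 i) (baseS v t s0 htv a.2 c.2.2 m i.succ)
            (baseX v t x0 a.1 c.2.1 i) (baseS v t s0 htv a.2 c.2.2 m i.castSucc)
          = ch.W (baseY t y0 b c.1 i) (baseS v t s0 htv (fun _ => s0) c.2.2 m i.succ)
            (baseX v t x0 (fun _ => x0) c.2.1 i)
            (baseS v t s0 htv (fun _ => s0) c.2.2 m i.castSucc)
        rw [baseX_high v t x0 a.1 (fun _ => x0) c.2.1 i (by omega),
          baseS_high v t s0 htv a.2 (fun _ => s0) c.2.2 m i.succ
            (by show (t : ℕ) ≤ (i : ℕ) + 1 + v; omega),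
          baseS_high v t s0 htv a.2 (fun _ => s0) c.2.2 m i.castSucc
            (by show (t : ℕ) ≤ (i : ℕ) + v; omega)]
      rw [hsplit1, hsplit2, einit, Finset.prod_congr rfl epol,
        Finset.prod_congr rfl ewlow, Finset.prod_congr rfl ewhigh]
      simp only [hFv]
      ring
    -- put everything together
    calc prE (jointP ch src) EE
        = ∑ ω : Traj X S Y N, ind (ω ∈ EE) * jointP ch src ω := prE_eq_sum_ind _ _
      _ = ∑ ω : Traj X S Y N, ∑ m : Fin (v + 1) → S,
            ind ((ω ∈ EE) ∧ (fun r : Fin (v + 1) =>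
              ω.2.1 ⟨(t : ℕ) - v + 1 + (r : ℕ), hwidx r⟩) = m) * jointP ch src ω := by
          refine Finset.sum_congr rfl fun ω _ => ?_
          rw [← Finset.sum_mul]
          congr 1
          have hcol : (∑ m : Fin (v + 1) → S, ind ((fun r : Fin (v + 1) =>
              ω.2.1 ⟨(t : ℕ) - v + 1 + (r : ℕ), hwidx r⟩) = m) * (1 : ℝ)) = 1 :=
            sum_ind_collapse _ _
          calc ind (ω ∈ EE) = ind (ω ∈ EE) * 1 := (mul_one _).symm
            _ = ∑ m : Fin (v + 1) → S, ind (ω ∈ EE) * (ind ((fun r : Fin (v + 1) =>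
                  ω.2.1 ⟨(t : ℕ) - v + 1 + (r : ℕ), hwidx r⟩) = m) * 1) := by
                rw [← Finset.mul_sum, hcol]
            _ = ∑ m : Fin (v + 1) → S, ind ((ω ∈ EE) ∧ (fun r : Fin (v + 1) =>
                  ω.2.1 ⟨(t : ℕ) - v + 1 + (r : ℕ), hwidx r⟩) = m) := by
                refine Finset.sum_congr rfl fun m _ => ?_
                rw [mul_one, ← ind_and]
      _ = ∑ m : Fin (v + 1) → S, ∑ ω : Traj X S Y N,
            ind ((ω ∈ EE) ∧ (fun r : Fin (v + 1) =>
              ω.2.1 ⟨(t : ℕ) - v + 1 + (r : ℕ), hwidx r⟩) = m) * jointP ch src ω :=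
          Finset.sum_comm
      _ = ∑ m : Fin (v + 1) → S, ∑ ω : Traj X S Y N,
            ind (Match ((t : ℕ) + 1) (Bse a b c m) ω) * jointP ch src ω := by
          refine Finset.sum_congr rfl fun m _ => Finset.sum_congr rfl fun ω _ => ?_
          rw [ind_congr (hEquiv ω m)]
      _ = ∑ m : Fin (v + 1) → S,
            (ch.init ((Bse a b c m).2.1 0) * ∏ i ∈ lowF, Ffac ch src i (Bse a b c m)) :=
          Finset.sum_congr rfl fun m _ => hmarg m
      _ = ∑ m : Fin (v + 1) → S,
            (Fv a c * ∏ i ∈ lowF.filter (fun i : Fin N => ¬((i : ℕ) + v + 1 ≤ (t : ℕ))),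
              wpart ch i (Bse (fun _ => x0, fun _ => s0) b c m)) :=
          Finset.sum_congr rfl fun m _ => hfact m
      _ = Fv a c * Gv b c := by rw [← Finset.mul_sum]
  -- assemble the conditional-independence identity
  intro a b c
  have hAC : ∀ a' : AT, prE (jointP ch src)
      {ω : Traj X S Y N |
        ((fun j : {j : Fin N // (j : ℕ) + v + 1 ≤ (t : ℕ)} => ω.1 j.1),
          fun j : {j : Fin (N + 1) // (j : ℕ) + v + 1 ≤ (t : ℕ)} => ω.2.1 j.1) = a' ∧
        ((fun j : {j : Fin N // (j : ℕ) < (t : ℕ)} => ω.2.2 j.1),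
          (fun j : {j : Fin N // (t : ℕ) ≤ (j : ℕ) + v ∧ (j : ℕ) ≤ (t : ℕ)} => ω.1 j.1),
          ω.2.1 ⟨(t : ℕ) - v, by have := t.isLt; omega⟩) = c}
      = Fv a' c * ∑ b' : Y, Gv b' c := by
    intro a'
    rw [prE_split_B (jointP ch src) (fun ω : Traj X S Y N => ω.2.2 t)]
    rw [Finset.sum_congr rfl fun b' _ => ?_, ← Finset.mul_sum]
    rw [show ({ω : Traj X S Y N |
        ((fun j : {j : Fin N // (j : ℕ) + v + 1 ≤ (t : ℕ)} => ω.1 j.1),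
          fun j : {j : Fin (N + 1) // (j : ℕ) + v + 1 ≤ (t : ℕ)} => ω.2.1 j.1) = a' ∧
        ((fun j : {j : Fin N // (j : ℕ) < (t : ℕ)} => ω.2.2 j.1),
          (fun j : {j : Fin N // (t : ℕ) ≤ (j : ℕ) + v ∧ (j : ℕ) ≤ (t : ℕ)} => ω.1 j.1),
          ω.2.1 ⟨(t : ℕ) - v, by have := t.isLt; omega⟩) = c}
        ∩ {ω : Traj X S Y N | ω.2.2 t = b'}) = {ω : Traj X S Y N |
        ((fun j : {j : Fin N // (j : ℕ) + v + 1 ≤ (t : ℕ)} => ω.1 j.1),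
          fun j : {j : Fin (N + 1) // (j : ℕ) + v + 1 ≤ (t : ℕ)} => ω.2.1 j.1) = a' ∧
        ω.2.2 t = b' ∧
        ((fun j : {j : Fin N // (j : ℕ) < (t : ℕ)} => ω.2.2 j.1),
          (fun j : {j : Fin N // (t : ℕ) ≤ (j : ℕ) + v ∧ (j : ℕ) ≤ (t : ℕ)} => ω.1 j.1),
          ω.2.1 ⟨(t : ℕ) - v, by have := t.isLt; omega⟩) = c} from
      Set.ext fun ω => by
        simp only [Set.mem_inter_iff, Set.mem_setOf_eq]
        tauto]
    exact key a' b' c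
  have hBC : prE (jointP ch src)
      {ω : Traj X S Y N | ω.2.2 t = b ∧
        ((fun j : {j : Fin N // (j : ℕ) < (t : ℕ)} => ω.2.2 j.1),
          (fun j : {j : Fin N // (t : ℕ) ≤ (j : ℕ) + v ∧ (j : ℕ) ≤ (t : ℕ)} => ω.1 j.1),
          ω.2.1 ⟨(t : ℕ) - v, by have := t.isLt; omega⟩) = c}
      = (∑ a' : AT, Fv a' c) * Gv b c := by
    rw [prE_split_B (jointP ch src) (fun ω : Traj X S Y N =>
      ((fun j : {j : Fin N // (j : ℕ) + v + 1 ≤ (t : ℕ)} => ω.1 j.1),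
        fun j : {j : Fin (N + 1) // (j : ℕ) + v + 1 ≤ (t : ℕ)} => ω.2.1 j.1))]
    rw [Finset.sum_congr rfl fun a' _ => ?_, ← Finset.sum_mul]
    rw [show ({ω : Traj X S Y N | ω.2.2 t = b ∧
        ((fun j : {j : Fin N // (j : ℕ) < (t : ℕ)} => ω.2.2 j.1),
          (fun j : {j : Fin N // (t : ℕ) ≤ (j : ℕ) + v ∧ (j : ℕ) ≤ (t : ℕ)} => ω.1 j.1),
          ω.2.1 ⟨(t : ℕ) - v, by have := t.isLt; omega⟩) = c}
        ∩ {ω : Traj X S Y N |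
          ((fun j : {j : Fin N // (j : ℕ) + v + 1 ≤ (t : ℕ)} => ω.1 j.1),
            fun j : {j : Fin (N + 1) // (j : ℕ) + v + 1 ≤ (t : ℕ)} => ω.2.1 j.1) = a'})
        = {ω : Traj X S Y N |
        ((fun j : {j : Fin N // (j : ℕ) + v + 1 ≤ (t : ℕ)} => ω.1 j.1),
          fun j : {j : Fin (N + 1) // (j : ℕ) + v + 1 ≤ (t : ℕ)} => ω.2.1 j.1) = a' ∧
        ω.2.2 t = b ∧
        ((fun j : {j : Fin N // (j : ℕ) < (t : ℕ)} => ω.2.2 j.1),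
          (fun j : {j : Fin N // (t : ℕ) ≤ (j : ℕ) + v ∧ (j : ℕ) ≤ (t : ℕ)} => ω.1 j.1),
          ω.2.1 ⟨(t : ℕ) - v, by have := t.isLt; omega⟩) = c} from
      Set.ext fun ω => by
        simp only [Set.mem_inter_iff, Set.mem_setOf_eq]
        tauto]
    exact key a' b c
  have hC : prE (jointP ch src)
      {ω : Traj X S Y N |
        ((fun j : {j : Fin N // (j : ℕ) < (t : ℕ)} => ω.2.2 j.1),
          (fun j : {j : Fin N // (t : ℕ) ≤ (j : ℕ) + v ∧ (j : ℕ) ≤ (t : ℕ)} => ω.1 j.1),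
          ω.2.1 ⟨(t : ℕ) - v, by have := t.isLt; omega⟩) = c}
      = (∑ a' : AT, Fv a' c) * ∑ b' : Y, Gv b' c := by
    rw [prE_split_B (jointP ch src) (fun ω : Traj X S Y N =>
      ((fun j : {j : Fin N // (j : ℕ) + v + 1 ≤ (t : ℕ)} => ω.1 j.1),
        fun j : {j : Fin (N + 1) // (j : ℕ) + v + 1 ≤ (t : ℕ)} => ω.2.1 j.1))]
    rw [Finset.sum_congr rfl fun a' _ => ?_, ← Finset.sum_mul]
    rw [show ({ω : Traj X S Y N |
        ((fun j : {j : Fin N // (j : ℕ) < (t : ℕ)} => ω.2.2 j.1),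
          (fun j : {j : Fin N // (t : ℕ) ≤ (j : ℕ) + v ∧ (j : ℕ) ≤ (t : ℕ)} => ω.1 j.1),
          ω.2.1 ⟨(t : ℕ) - v, by have := t.isLt; omega⟩) = c}
        ∩ {ω : Traj X S Y N |
          ((fun j : {j : Fin N // (j : ℕ) + v + 1 ≤ (t : ℕ)} => ω.1 j.1),
            fun j : {j : Fin (N + 1) // (j : ℕ) + v + 1 ≤ (t : ℕ)} => ω.2.1 j.1) = a'})
        = {ω : Traj X S Y N |
        ((fun j : {j : Fin N // (j : ℕ) + v + 1 ≤ (t : ℕ)} => ω.1 j.1),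
          fun j : {j : Fin (N + 1) // (j : ℕ) + v + 1 ≤ (t : ℕ)} => ω.2.1 j.1) = a' ∧
        ((fun j : {j : Fin N // (j : ℕ) < (t : ℕ)} => ω.2.2 j.1),
          (fun j : {j : Fin N // (t : ℕ) ≤ (j : ℕ) + v ∧ (j : ℕ) ≤ (t : ℕ)} => ω.1 j.1),
          ω.2.1 ⟨(t : ℕ) - v, by have := t.isLt; omega⟩) = c} from
      Set.ext fun ω => by
        simp only [Set.mem_inter_iff, Set.mem_setOf_eq]
        tauto]
    exact hAC a'
  rw [key a b c, hC, hAC a, hBC]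
  ring


end FSCPaper
end
end

section
/- Theorem 1 (finite-horizon form): For a non-controllable FSC with a source in 𝒫(u,u) where u ≥ v ≥ 0, for every t ∈ {1,…,N}: I(X^t, S_0^{t-v-1}; Y_t | Y^{t-1}) = I(X_{t-v}^t, S_{t-v-1}; Y_t | Y^{t-1}) (for t ≤ v the state blocks are empty and X_{t-v}^t is truncated to X^t, so the identity is read with the corresponding windows). Consequently Σ_{t=1}^N I(X^t, S_0^{t-v-1}; Y_t | Y^{t-1}) = Σ_{t=1}^N I(X_{t-v}^t, S_{t-v-1}; Y_t | Y^{t-1}). -/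
/-!
Common framework: finite-state channels (FSCs), non-controllable FSCs,
sources with delayed feedback (FB) and delayed state information (SI),
induced joint pmfs, conditional probabilities and conditional mutual
information, following Huang–Kavčić–Ma, "Upper Bounds on the Capacities of
Non-Controllable Finite-State Channels with/without Feedback".

Time convention: for a horizon `N`, the channel inputs are `X_1,…,X_N`
(coordinate `x i` of `x : Fin N → X` is `X_{i+1}`), the states are
`S_0,…,S_N` (coordinate `s j` of `s : Fin (N+1) → S` is `S_j`), and the
outputs are `Y_1,…,Y_N` (coordinate `y i` is `Y_{i+1}`).
-/

open Finset

noncomputable section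

namespace FSCPaper

section Generic

variable {Ω : Type} [Fintype Ω]

lemma prE_eq_sum_fiber {α : Type} [Fintype α] (p : Ω → ℝ) (f : Ω → α) (E : Set Ω) :
    prE p E = ∑ a, prE p (E ∩ {ω | f ω = a}) := by
  classical
  unfold prE
  rw [Finset.sum_comm]
  refine Finset.sum_congr rfl fun ω _ => ?_
  simp [Set.indicator_apply, ite_and]

lemma prE_pos_of_mem {p : Ω → ℝ} (hp : ∀ ω, 0 ≤ p ω) {E : Set Ω} {ω : Ω} (hωE : ω ∈ E)
    (hω : 0 < p ω) : 0 < prE p E :=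
  hω.trans_le <| by
    simpa only [prE, Set.indicator_of_mem hωE] using Finset.single_le_sum (f := E.indicator p)
      (fun ω _ => Set.indicator_nonneg (fun ω _ => hp ω) ω) (Finset.mem_univ ω)

lemma prE_singleton (p : Ω → ℝ) (ω : Ω) : prE p {ω} = p ω := by
  classical
  simp [prE, Set.indicator_apply]

lemma prE_eq_mul_of_eqOn {p q : Ω → ℝ} {E : Set Ω} (c : ℝ) (h : ∀ ω ∈ E, p ω = c * q ω) :
    prE p E = c * prE q E := by
  classical
  unfold prE
  rw [Finset.mul_sum]
  refine Finset.sum_congr rfl fun ω _ => ?_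
  by_cases hω : ω ∈ E
  · simp [hω, h ω hω]
  · simp [hω]

lemma sum_prE_fiber_mul {α : Type} [Fintype α] (p : Ω → ℝ) (f : Ω → α) (L : α → ℝ) :
    ∑ a, prE p {ω | f ω = a} * L a = ∑ ω, p ω * L (f ω) := by
  classical
  simp_rw [prE, Finset.sum_mul]
  rw [Finset.sum_comm]
  refine Finset.sum_congr rfl fun ω _ => ?_
  simp [Set.indicator_apply]

lemma condPr_div_condPr (p : Ω → ℝ) (E F G : Set Ω) (hG : prE p G ≠ 0) :
    condPr p E G / condPr p F G = prE p (E ∩ G) / prE p (F ∩ G) :=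
  div_div_div_cancel_right₀ hG _ _

variable {A B C : Type}

def condPMI (p : Ω → ℝ) (fA : Ω → A) (fB : Ω → B) (fC : Ω → C) (ω : Ω) : ℝ :=
  Real.log (condPr p {ω' | fA ω' = fA ω ∧ fB ω' = fB ω} {ω' | fC ω' = fC ω} /
    (condPr p {ω' | fA ω' = fA ω} {ω' | fC ω' = fC ω} *
      condPr p {ω' | fB ω' = fB ω} {ω' | fC ω' = fC ω}))

lemma condMI_eq_sum_condPMI [Fintype A] [Fintype B] [Fintype C] (p : Ω → ℝ) (fA : Ω → A)
    (fB : Ω → B) (fC : Ω → C) :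
    condMI p fA fB fC = ∑ ω, p ω * condPMI p fA fB fC ω := by
  unfold condPMI
  rw [← sum_prE_fiber_mul p (fun ω => (fA ω, fB ω, fC ω)) fun abc =>
    Real.log (condPr p {ω' | fA ω' = abc.1 ∧ fB ω' = abc.2.1} {ω' | fC ω' = abc.2.2} /
      (condPr p {ω' | fA ω' = abc.1} {ω' | fC ω' = abc.2.2} *
        condPr p {ω' | fB ω' = abc.2.1} {ω' | fC ω' = abc.2.2}))]
  simp only [condMI, Fintype.sum_prod_type, Prod.mk.injEq]

lemma prE_rectangle_eq_mul (p : Ω → ℝ) (fA : Ω → A) (fB : Ω → B) (fC : Ω → C) (U : Finset A)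
    (V : Finset B) (c : C) {F : A → ℝ} {G : B → ℝ}
    (hFG : ∀ a ∈ U, ∀ b ∈ V, prE p {ω | fA ω = a ∧ fB ω = b ∧ fC ω = c} = F a * G b) :
    prE p {ω | fA ω ∈ U ∧ fB ω ∈ V ∧ fC ω = c} = (∑ a ∈ U, F a) * ∑ b ∈ V, G b := by
  classical
  rw [Finset.sum_mul_sum, ← Finset.sum_congr rfl fun a ha =>
    Finset.sum_congr rfl fun b hb => hFG a ha b hb]
  unfold prE
  simp_rw [Finset.sum_comm (s := V), Finset.sum_comm (s := U) (t := Finset.univ)]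
  refine Finset.sum_congr rfl fun ω _ => ?_
  simp [Set.indicator_apply, ite_and]

lemma condPMI_comp_eq_of_fiberwise_prod {A' : Type} [Fintype A] [Fintype B] {p : Ω → ℝ}
    (hp : ∀ ω, 0 ≤ p ω) {fA : Ω → A} {fB : Ω → B} {fC : Ω → C} (g : A → A') {ω : Ω}
    (hω : 0 < p ω) {F : A → ℝ} {G : B → ℝ}
    (hFG : ∀ a b, g a = g (fA ω) →
      prE p {ω' | fA ω' = a ∧ fB ω' = b ∧ fC ω' = fC ω} = F a * G b) :
    condPMI p fA fB fC ω = condPMI p (g ∘ fA) fB fC ω := by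
  classical
  have hrect : ∀ U V, (∀ a ∈ U, g a = g (fA ω)) →
      prE p {ω' | fA ω' ∈ U ∧ fB ω' ∈ V ∧ fC ω' = fC ω} = (∑ a ∈ U, F a) * ∑ b ∈ V, G b :=
    fun U V hU => prE_rectangle_eq_mul p fA fB fC U V _ fun a ha b _ => hFG a b (hU a ha)
  set fiber := Finset.univ.filter fun a => g a = g (fA ω)
  have hfiber : ∀ a ∈ fiber, g a = g (fA ω) := fun a ha => (Finset.mem_filter.1 ha).2
  have hAB : prE p ({ω' | fA ω' = fA ω ∧ fB ω' = fB ω} ∩ {ω' | fC ω' = fC ω}) =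
      F (fA ω) * G (fB ω) := by
    rw [← hFG _ _ rfl]; congr 1; ext; simp [and_assoc]
  have hA : prE p ({ω' | fA ω' = fA ω} ∩ {ω' | fC ω' = fC ω}) = F (fA ω) * ∑ b, G b := by
    have h := hrect {fA ω} Finset.univ (by simp)
    rw [Finset.sum_singleton] at h
    rw [← h]; congr 1; ext; simp
  have hgAB : prE p ({ω' | g (fA ω') = g (fA ω) ∧ fB ω' = fB ω} ∩ {ω' | fC ω' = fC ω}) =
      (∑ a ∈ fiber, F a) * G (fB ω) := by
    have h := hrect fiber {fB ω} hfiber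
    rw [Finset.sum_singleton] at h
    rw [← h]; congr 1; ext; simp [fiber, and_assoc]
  have hgA : prE p ({ω' | g (fA ω') = g (fA ω)} ∩ {ω' | fC ω' = fC ω}) =
      (∑ a ∈ fiber, F a) * ∑ b, G b := by
    rw [← hrect fiber Finset.univ hfiber]; congr 1; ext; simp [fiber]
  have hpos : ∀ E : Set Ω, ω ∈ E → prE p E ≠ 0 := fun E hE => (prE_pos_of_mem hp hE hω).ne'
  have hC := hpos {ω' | fC ω' = fC ω} rfl
  unfold condPMI
  simp only [Function.comp_apply]
  rw [div_mul_eq_div_div, div_mul_eq_div_div, condPr_div_condPr _ _ _ _ hC,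
    condPr_div_condPr _ _ _ _ hC]
  congr 2
  rw [div_eq_div_iff (hpos _ (by simp)) (hpos _ (by simp)), hAB, hA, hgAB, hgA]
  ring

theorem condMI_comp_eq_of_fiberwise_prod {A' : Type} [Fintype A] [Fintype A'] [Fintype B]
    [Fintype C] {p : Ω → ℝ} (hp : ∀ ω, 0 ≤ p ω) (fA : Ω → A) (fB : Ω → B) (fC : Ω → C)
    (g : A → A')
    (hprod : ∀ ω, ∃ (F : A → ℝ) (G : B → ℝ), ∀ a b, g a = g (fA ω) →
      prE p {ω' | fA ω' = a ∧ fB ω' = b ∧ fC ω' = fC ω} = F a * G b) :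
    condMI p fA fB fC = condMI p (g ∘ fA) fB fC := by
  rw [condMI_eq_sum_condPMI, condMI_eq_sum_condPMI]
  refine Finset.sum_congr rfl fun ω _ => ?_
  rcases (hp ω).eq_or_lt with hzero | hpos
  · rw [← hzero, zero_mul, zero_mul]
  · obtain ⟨F, G, hFG⟩ := hprod ω
    rw [condPMI_comp_eq_of_fiberwise_prod hp g hpos hFG]

end Generic

lemma forall_lt_succ_update_iff {n : ℕ} {β : Type} (f g : Fin n → β) (j₀ : Fin n) (b : β) :
    (∀ j : Fin n, (j : ℕ) < j₀ + 1 → f j = Function.update g j₀ b j) ↔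
      (∀ j : Fin n, (j : ℕ) < j₀ → f j = g j) ∧ f j₀ = b := by
  constructor
  · intro h
    refine ⟨fun j hj => ?_, by simpa using h j₀ (Nat.lt_succ_self _)⟩
    rw [h j (by omega), Function.update_of_ne (Fin.ne_of_lt hj)]
  · rintro ⟨h, rfl⟩ j hj
    rcases Nat.lt_succ_iff_lt_or_eq.1 hj with hj | hj
    · rw [Function.update_of_ne (Fin.ne_of_lt hj), h j hj]
    · rw [Fin.ext hj, Function.update_self]

lemma prod_filter_eq_prod_filter_mul {ι M : Type} [Fintype ι] [CommMonoid M] {p q : ι → Prop}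
    [DecidablePred p] [DecidablePred q] (hqp : ∀ i, q i → p i) (f : ι → M) :
    ∏ i ∈ Finset.univ.filter p, f i =
      (∏ i ∈ Finset.univ.filter q, f i) * ∏ i ∈ Finset.univ.filter (fun i => p i ∧ ¬q i), f i := by
  rw [← Finset.prod_filter_mul_prod_filter_not (Finset.univ.filter p) q, Finset.filter_filter,
    Finset.filter_filter]
  congr 2
  exact Finset.filter_congr fun i _ => ⟨fun h => h.2, fun h => ⟨hqp i h, h⟩⟩

section Cylinder

variable {X S Y : Type} {N : ℕ}

def cyl (k : ℕ) (ω₀ : Traj X S Y N) : Set (Traj X S Y N) :=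
  {ω | (∀ i : Fin N, (i : ℕ) < k → ω.1 i = ω₀.1 i) ∧
    (∀ j : Fin (N + 1), (j : ℕ) < k + 1 → ω.2.1 j = ω₀.2.1 j) ∧
    (∀ i : Fin N, (i : ℕ) < k → ω.2.2 i = ω₀.2.2 i)}

lemma mem_cyl_self (k : ℕ) (ω : Traj X S Y N) : ω ∈ cyl k ω :=
  ⟨fun _ _ => rfl, fun _ _ => rfl, fun _ _ => rfl⟩

lemma cyl_horizon_eq_singleton (ω₀ : Traj X S Y N) : cyl N ω₀ = {ω₀} := by
  ext ω
  refine ⟨fun ⟨hx, hs, hy⟩ => ?_, fun h => h ▸ mem_cyl_self N ω⟩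
  exact Prod.ext (funext fun i => hx i i.isLt)
    (Prod.ext (funext fun j => hs j j.isLt) (funext fun i => hy i i.isLt))

def block (k : Fin N) (ω : Traj X S Y N) : X × S × Y :=
  (ω.1 k, ω.2.1 k.succ, ω.2.2 k)

def setBlock (k : Fin N) (ω : Traj X S Y N) (abc : X × S × Y) : Traj X S Y N :=
  (Function.update ω.1 k abc.1, Function.update ω.2.1 k.succ abc.2.1,
    Function.update ω.2.2 k abc.2.2)

lemma cyl_inter_block (k : Fin N) (ω₀ : Traj X S Y N) (abc : X × S × Y) :
    cyl k ω₀ ∩ {ω | block k ω = abc} = cyl (k + 1) (setBlock k ω₀ abc) := by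
  ext ω
  have hs := forall_lt_succ_update_iff ω.2.1 ω₀.2.1 k.succ abc.2.1
  simp only [Fin.val_succ] at hs
  simp only [cyl, block, setBlock, Set.mem_inter_iff, Set.mem_ofPred_eq, Prod.ext_iff,
    forall_lt_succ_update_iff, hs]
  tauto

lemma setBlock_mem_cyl (k : Fin N) (ω₀ : Traj X S Y N) (abc : X × S × Y) :
    setBlock k ω₀ abc ∈ cyl k ω₀ := by
  have h := mem_cyl_self (k + 1) (setBlock k ω₀ abc)
  rw [← cyl_inter_block] at h
  exact h.1

end Cylinder

section Channel

variable {X S Y : Type} [Fintype X] [Fintype S] [Fintype Y] {N u : ℕ} (ch : NCFSC X S Y)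
  (src : Source X S Y N u)

def inputFactor (ω : Traj X S Y N) (i : Fin N) : ℝ :=
  src.pol i ω.1 ω.2.1 ω.2.2 (ω.1 i)

def outputFactor (ω : Traj X S Y N) (i : Fin N) : ℝ :=
  ch.P (ω.2.2 i) (ω.1 i) (ω.2.1 i.castSucc)

def stateFactor (ω : Traj X S Y N) (i : Fin N) : ℝ :=
  ch.Q (ω.2.1 i.succ) (ω.2.1 i.castSucc)

def stepWeight (ω : Traj X S Y N) (i : Fin N) : ℝ :=
  inputFactor src ω i * (outputFactor ch ω i * stateFactor ch ω i)

lemma jointP_eq_init_mul_prod (ω : Traj X S Y N) :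
    jointP ch src ω = ch.init (ω.2.1 0) * ∏ i, stepWeight ch src ω i := rfl

lemma stepWeight_nonneg (ω : Traj X S Y N) (i : Fin N) : 0 ≤ stepWeight ch src ω i :=
  mul_nonneg (src.nonneg _ _ _ _ _) (mul_nonneg (ch.P_nonneg _ _ _) (ch.Q_nonneg _ _))

lemma jointP_nonneg (ω : Traj X S Y N) : 0 ≤ jointP ch src ω :=
  mul_nonneg (ch.init_nonneg _) (Finset.prod_nonneg fun i _ => stepWeight_nonneg ch src ω i)

variable {ch src}

lemma pol_eq_of_mem_cyl {k : ℕ} {ω₀ ω : Traj X S Y N} (hω : ω ∈ cyl k ω₀) {i : Fin N}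
    (hi : (i : ℕ) ≤ k) : src.pol i ω.1 ω.2.1 ω.2.2 = src.pol i ω₀.1 ω₀.2.1 ω₀.2.2 :=
  src.causal i _ _ _ _ _ _ (fun j hj => hω.1 j (by omega)) (fun j hj => hω.2.1 j (by omega))
    (fun j hj => hω.2.2 j (by omega))

lemma stepWeight_eq_of_mem_cyl {k : ℕ} {ω₀ ω : Traj X S Y N} (hω : ω ∈ cyl k ω₀) {i : Fin N}
    (hi : (i : ℕ) < k) : stepWeight ch src ω i = stepWeight ch src ω₀ i := by
  obtain ⟨hx, hs, hy⟩ := hω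
  simp only [stepWeight, inputFactor, outputFactor, stateFactor]
  rw [pol_eq_of_mem_cyl ⟨hx, hs, hy⟩ hi.le, hx i hi, hy i hi, hs i.succ (by simp; omega),
    hs i.castSucc (by simp; omega)]

variable (ch src)

lemma sum_stepWeight_setBlock (k : Fin N) (ω₀ : Traj X S Y N) :
    ∑ abc, stepWeight ch src (setBlock k ω₀ abc) k = 1 := by
  have hcast : k.castSucc ≠ k.succ := Fin.castSucc_lt_succ.ne
  simp only [stepWeight, inputFactor, outputFactor, stateFactor,
    pol_eq_of_mem_cyl (setBlock_mem_cyl k ω₀ _) le_rfl]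
  simp only [setBlock, Function.update_self, Function.update_of_ne hcast, Fintype.sum_prod_type]
  simp_rw [← Finset.mul_sum, mul_comm (ch.P _ _ _), ← Finset.mul_sum, ← Finset.sum_mul,
    ch.P_sum, ch.Q_sum, one_mul, mul_one, src.sum_one]

lemma prE_cyl_tail_eq_one {k : ℕ} (hk : k ≤ N) (ω₀ : Traj X S Y N) :
    prE (fun ω => ∏ i ∈ Finset.univ.filter (fun i : Fin N => k ≤ (i : ℕ)), stepWeight ch src ω i)
      (cyl k ω₀) = 1 := by
  induction hk using Nat.decreasingInduction generalizing ω₀ with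
  | self =>
    rw [cyl_horizon_eq_singleton, prE_singleton]
    exact Finset.prod_eq_one fun i hi => absurd (Finset.mem_filter.1 hi).2 (not_le.2 i.isLt)
  | of_succ k hk ih =>
    let kf : Fin N := ⟨k, hk⟩
    rw [prE_eq_sum_fiber _ (block kf), ← sum_stepWeight_setBlock ch src kf ω₀]
    refine Finset.sum_congr rfl fun abc _ => ?_
    rw [(cyl_inter_block kf ω₀ abc : cyl k ω₀ ∩ _ = cyl (k + 1) _),
      prE_eq_mul_of_eqOn _ fun ω hω => ?_, ih, mul_one]
    have hsplit : Finset.univ.filter (fun i : Fin N => k ≤ (i : ℕ)) =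
        insert kf (Finset.univ.filter fun i : Fin N => k + 1 ≤ (i : ℕ)) := by
      ext i; simp [kf, Fin.ext_iff]; omega
    rw [hsplit, Finset.prod_insert (by simp [kf]),
      stepWeight_eq_of_mem_cyl hω (Nat.lt_succ_self k)]

lemma prE_cyl {k : ℕ} (hk : k ≤ N) (ω₀ : Traj X S Y N) :
    prE (jointP ch src) (cyl k ω₀) =
      ch.init (ω₀.2.1 0) *
        ∏ i ∈ Finset.univ.filter (fun i : Fin N => (i : ℕ) < k), stepWeight ch src ω₀ i := by
  rw [prE_eq_mul_of_eqOn _ fun ω hω => ?_, prE_cyl_tail_eq_one ch src hk, mul_one]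
  rw [jointP_eq_init_mul_prod,
    ← Finset.prod_filter_mul_prod_filter_not Finset.univ (fun i : Fin N => (i : ℕ) < k),
    hω.2.1 0 (Nat.succ_pos k), mul_assoc]
  congr 2
  · exact Finset.prod_congr rfl fun i hi => stepWeight_eq_of_mem_cyl hω (Finset.mem_filter.1 hi).2
  · exact Finset.prod_congr (Finset.filter_congr fun i _ => not_lt) fun _ _ => rfl

end Channel

section Window

variable {X S Y : Type} {N : ℕ}

def pastEvent (t : Fin N) (v : ℕ) (ω₀ : Traj X S Y N) : Set (Traj X S Y N) :=
  {ω | (∀ i : Fin N, (i : ℕ) < t + 1 → ω.1 i = ω₀.1 i) ∧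
    (∀ j : Fin (N + 1), (j : ℕ) + v ≤ t → ω.2.1 j = ω₀.2.1 j) ∧
    (∀ i : Fin N, (i : ℕ) < t + 1 → ω.2.2 i = ω₀.2.2 i)}

/-- The states fixed by `cyl (t + 1)` but not by `pastEvent t v`. -/
abbrev FreeState (t : Fin N) (v : ℕ) : Type :=
  {j : Fin (N + 1) // (t : ℕ) < j + v ∧ (j : ℕ) < t + 1 + 1}

def mergeStates (t : Fin N) (v : ℕ) (ω : Traj X S Y N) (τ : FreeState t v → S) :
    Traj X S Y N :=
  (ω.1, Function.extend Subtype.val τ ω.2.1, ω.2.2)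

lemma mergeStates_state_of_add_le {t : Fin N} {v : ℕ} (ω : Traj X S Y N) (τ : FreeState t v → S)
    {j : Fin (N + 1)} (hj : (j : ℕ) + v ≤ t) : (mergeStates t v ω τ).2.1 j = ω.2.1 j :=
  Function.extend_val_apply' (by omega)

lemma mergeStates_state_free {t : Fin N} {v : ℕ} (ω : Traj X S Y N) (τ : FreeState t v → S)
    (j : FreeState t v) : (mergeStates t v ω τ).2.1 j = τ j :=
  Subtype.val_injective.extend_apply τ ω.2.1 j

lemma pastEvent_inter_freeStates (t : Fin N) (v : ℕ) (ω₀ : Traj X S Y N)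
    (τ : FreeState t v → S) :
    pastEvent t v ω₀ ∩ {ω | (fun j : FreeState t v => ω.2.1 j.1) = τ} =
      cyl (t + 1) (mergeStates t v ω₀ τ) := by
  ext ω
  constructor
  · rintro ⟨⟨hx, hs, hy⟩, rfl⟩
    refine ⟨hx, fun j hj => ?_, hy⟩
    by_cases hfree : (t : ℕ) < j + v
    · exact (mergeStates_state_free ω₀ (fun j : FreeState t v => ω.2.1 j.1) ⟨j, hfree, hj⟩).symm
    · rw [mergeStates_state_of_add_le _ _ (by omega)]
      exact hs j (by omega)
  · rintro ⟨hx, hs, hy⟩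
    refine ⟨⟨hx, fun j hj => ?_, hy⟩, funext fun j => ?_⟩
    · rw [hs j (by omega), mergeStates_state_of_add_le _ _ hj]
    · rw [hs j j.2.2, mergeStates_state_free]

end Window

section Factorization

variable {X S Y : Type} [Fintype S] [Fintype Y] {N : ℕ} (ch : NCFSC X S Y)

def windowFactor (t : Fin N) (v : ℕ) (ω : Traj X S Y N) : ℝ :=
  (if v ≤ t then 1 else ch.init (ω.2.1 0)) *
    (∏ i ∈ Finset.univ.filter (fun i : Fin N =>
        (i : ℕ) < t + 1 ∧ ¬((i : ℕ) < t ∧ (i : ℕ) + v ≤ t)), outputFactor ch ω i) *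
    ∏ i ∈ Finset.univ.filter (fun i : Fin N => (i : ℕ) < t + 1 ∧ ¬((i : ℕ) + 1 + v ≤ t)),
      stateFactor ch ω i

def windowWeight (t : Fin N) (v : ℕ) (ω : Traj X S Y N) : ℝ :=
  ∑ τ : FreeState t v → S, windowFactor ch t v (mergeStates t v ω τ)

variable {ch}

lemma windowFactor_congr {t : Fin N} {v : ℕ} {ω ω' : Traj X S Y N}
    (hx : ∀ i : Fin N, (t : ℕ) ≤ i + v → (i : ℕ) < t + 1 → ω.1 i = ω'.1 i)
    (hs : ∀ j : Fin (N + 1), (t : ℕ) ≤ j + v → (j : ℕ) < t + 1 + 1 → ω.2.1 j = ω'.2.1 j)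
    (hy : ∀ i : Fin N, (i : ℕ) < t + 1 → ω.2.2 i = ω'.2.2 i) :
    windowFactor ch t v ω = windowFactor ch t v ω' := by
  unfold windowFactor
  congr 1
  congr 1
  · split_ifs with hv
    · rfl
    · rw [hs 0 (by simp; omega) (by simp)]
  · refine Finset.prod_congr rfl fun i hi => ?_
    have hi := (Finset.mem_filter.1 hi).2
    simp only [outputFactor]
    rw [hy i hi.1, hx i (by omega) hi.1, hs i.castSucc (by simp; omega) (by simp; omega)]
  · refine Finset.prod_congr rfl fun i hi => ?_
    have hi := (Finset.mem_filter.1 hi).2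
    simp only [stateFactor]
    rw [hs i.castSucc (by simp; omega) (by simp; omega),
      hs i.succ (by simp; omega) (by simp; omega)]

lemma windowWeight_congr {t : Fin N} {v : ℕ} {ω ω' : Traj X S Y N}
    (hx : ∀ i : Fin N, (t : ℕ) ≤ i + v → (i : ℕ) < t + 1 → ω.1 i = ω'.1 i)
    (hs : ∀ j : Fin (N + 1), (j : ℕ) + v = t → ω.2.1 j = ω'.2.1 j)
    (hy : ∀ i : Fin N, (i : ℕ) < t + 1 → ω.2.2 i = ω'.2.2 i) :
    windowWeight ch t v ω = windowWeight ch t v ω' := by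
  refine Finset.sum_congr rfl fun τ _ => windowFactor_congr hx (fun j hj hj' => ?_) hy
  by_cases hfree : (t : ℕ) < j + v
  · rw [mergeStates_state_free ω τ ⟨j, hfree, hj'⟩, mergeStates_state_free ω' τ ⟨j, hfree, hj'⟩]
  · rw [mergeStates_state_of_add_le ω τ (by omega), mergeStates_state_of_add_le ω' τ (by omega),
      hs j (by omega)]

variable [Fintype X] {u : ℕ} (ch) (src : Source X S Y N u)

def pastWeight (t : Fin N) (v : ℕ) (ω : Traj X S Y N) : ℝ :=
  (if v ≤ t then ch.init (ω.2.1 0) else 1) *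
    (∏ i ∈ Finset.univ.filter (fun i : Fin N => (i : ℕ) < t + 1), inputFactor src ω i) *
    (∏ i ∈ Finset.univ.filter (fun i : Fin N => (i : ℕ) < t ∧ (i : ℕ) + v ≤ t),
      outputFactor ch ω i) *
    ∏ i ∈ Finset.univ.filter (fun i : Fin N => (i : ℕ) + 1 + v ≤ t), stateFactor ch ω i

lemma init_mul_prod_stepWeight (t : Fin N) (v : ℕ) (ω : Traj X S Y N) :
    ch.init (ω.2.1 0) *
        ∏ i ∈ Finset.univ.filter (fun i : Fin N => (i : ℕ) < t + 1), stepWeight ch src ω i =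
      pastWeight ch src t v ω * windowFactor ch t v ω := by
  have hinit : ch.init (ω.2.1 0) =
      (if v ≤ t then ch.init (ω.2.1 0) else 1) * (if v ≤ t then 1 else ch.init (ω.2.1 0)) := by
    split_ifs <;> simp
  simp only [stepWeight, Finset.prod_mul_distrib]
  rw [prod_filter_eq_prod_filter_mul (q := fun i : Fin N => (i : ℕ) < t ∧ (i : ℕ) + v ≤ t)
      (fun i hi => by omega) (outputFactor ch ω),
    prod_filter_eq_prod_filter_mul (q := fun i : Fin N => (i : ℕ) + 1 + v ≤ t)
      (fun i hi => by omega) (stateFactor ch ω), pastWeight, windowFactor]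
  conv_lhs => rw [hinit]
  ac_rfl

lemma prE_pastEvent (t : Fin N) (v : ℕ) (ω : Traj X S Y N) :
    prE (jointP ch src) (pastEvent t v ω) =
      ∑ τ : FreeState t v → S, ch.init ((mergeStates t v ω τ).2.1 0) *
        ∏ i ∈ Finset.univ.filter (fun i : Fin N => (i : ℕ) < t + 1),
          stepWeight ch src (mergeStates t v ω τ) i := by
  rw [prE_eq_sum_fiber _ fun ω (j : FreeState t v) => ω.2.1 j.1]
  refine Finset.sum_congr rfl fun τ _ => ?_
  rw [pastEvent_inter_freeStates, prE_cyl ch src t.isLt]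

variable {ch src}

lemma pastWeight_congr {v : ℕ} (hvu : v ≤ u) {t : Fin N} {ω ω' : Traj X S Y N}
    (hx : ∀ i : Fin N, (i : ℕ) < t + 1 → ω.1 i = ω'.1 i)
    (hs : ∀ j : Fin (N + 1), (j : ℕ) + v ≤ t → ω.2.1 j = ω'.2.1 j)
    (hy : ∀ i : Fin N, (i : ℕ) < t → ω.2.2 i = ω'.2.2 i) :
    pastWeight ch src t v ω = pastWeight ch src t v ω' := by
  unfold pastWeight
  congr 1
  congr 1
  congr 1
  · split_ifs with hv
    · rw [hs 0 (by simpa using hv)]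
    · rfl
  · refine Finset.prod_congr rfl fun i hi => ?_
    have hi := (Finset.mem_filter.1 hi).2
    simp only [inputFactor]
    rw [src.causal i ω.1 ω'.1 ω.2.1 ω'.2.1 ω.2.2 ω'.2.2 (fun j hj => hx j (by omega))
      (fun j hj => hs j (by omega)) (fun j hj => hy j (by omega)), hx i hi]
  · refine Finset.prod_congr rfl fun i hi => ?_
    have hi := (Finset.mem_filter.1 hi).2
    simp only [outputFactor]
    rw [hx i (by omega), hy i hi.1, hs i.castSucc (by simp; omega)]
  · refine Finset.prod_congr rfl fun i hi => ?_
    have hi := (Finset.mem_filter.1 hi).2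
    simp only [stateFactor]
    rw [hs i.castSucc (by simp; omega), hs i.succ (by simp; omega)]

lemma prE_pastEvent_eq_mul {v : ℕ} (hvu : v ≤ u) (t : Fin N) (ω : Traj X S Y N) :
    prE (jointP ch src) (pastEvent t v ω) = pastWeight ch src t v ω * windowWeight ch t v ω := by
  rw [prE_pastEvent, windowWeight, Finset.mul_sum]
  refine Finset.sum_congr rfl fun τ _ => ?_
  rw [init_mul_prod_stepWeight ch src t v,
    pastWeight_congr (ω := mergeStates t v ω τ) (ω' := ω) hvu (fun _ _ => rfl)
      (fun j hj => mergeStates_state_of_add_le ω τ hj) (fun _ _ => rfl)]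

end Factorization

section Theorem

variable {X S Y : Type} {N : ℕ}

/-- `(X^t, S_0^{t-v-1})` in the paper's 1-based notation. -/
def pastInputs (t : Fin N) (v : ℕ) (ω : Traj X S Y N) :
    ({j : Fin N // (j : ℕ) ≤ t} → X) × ({j : Fin (N + 1) // (j : ℕ) + v ≤ t} → S) :=
  (fun j => ω.1 j.1, fun j => ω.2.1 j.1)

/-- `(X^t, S_0^{t-v-1}) ↦ (X_{t-v}^t, S_{t-v-1})` in the paper's 1-based notation. -/
def window (t : Fin N) (v : ℕ)
    (a : ({j : Fin N // (j : ℕ) ≤ t} → X) × ({j : Fin (N + 1) // (j : ℕ) + v ≤ t} → S)) :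
    ({j : Fin N // (t : ℕ) ≤ j + v ∧ (j : ℕ) ≤ t} → X) ×
      ({j : Fin (N + 1) // (j : ℕ) + v = t} → S) :=
  (fun j => a.1 ⟨j.1, j.2.2⟩, fun j => a.2 ⟨j.1, j.2.le⟩)

def pastOutputs (t : Fin N) (ω : Traj X S Y N) : {j : Fin N // (j : ℕ) < t} → Y :=
  fun j => ω.2.2 j.1

def replacePast (t : Fin N) (v : ℕ) (ω : Traj X S Y N)
    (a : ({j : Fin N // (j : ℕ) ≤ t} → X) × ({j : Fin (N + 1) // (j : ℕ) + v ≤ t} → S)) (b : Y) :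
    Traj X S Y N :=
  (Function.extend Subtype.val a.1 ω.1, Function.extend Subtype.val a.2 ω.2.1,
    Function.update ω.2.2 t b)

lemma fiber_eq_pastEvent (t : Fin N) (v : ℕ) (ω₀ : Traj X S Y N)
    (a : ({j : Fin N // (j : ℕ) ≤ t} → X) × ({j : Fin (N + 1) // (j : ℕ) + v ≤ t} → S)) (b : Y) :
    {ω | pastInputs t v ω = a ∧ ω.2.2 t = b ∧ pastOutputs t ω = pastOutputs t ω₀} =
      pastEvent t v (replacePast t v ω₀ a b) := by
  ext ω
  simp only [pastEvent, replacePast, Set.mem_ofPred_eq, forall_lt_succ_update_iff]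
  constructor
  · rintro ⟨rfl, hb, hC⟩
    refine ⟨fun i hi => ?_, fun j hj => ?_, fun i hi => congrFun hC ⟨i, hi⟩, hb⟩
    · exact (Function.extend_val_apply (g := (pastInputs t v ω).1) (j := ω₀.1)
        (Nat.lt_succ_iff.1 hi)).symm
    · exact (Function.extend_val_apply (g := (pastInputs t v ω).2) (j := ω₀.2.1) hj).symm
  · rintro ⟨hx, hs, hy, hb⟩
    refine ⟨Prod.ext (funext fun i => ?_) (funext fun j => ?_), hb, funext fun i => hy i i.2⟩
    · exact (hx i (Nat.lt_succ_of_le i.2)).trans (Function.extend_val_apply (j := ω₀.1) i.2)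
    · exact (hs j j.2).trans (Function.extend_val_apply (j := ω₀.2.1) j.2)

variable [Fintype X] [Fintype S] [Fintype Y] {u : ℕ} {ch : NCFSC X S Y}
  {src : Source X S Y N u}

lemma prE_fiber_eq_mul {v : ℕ} (hvu : v ≤ u) (t : Fin N) (ω₀ : Traj X S Y N)
    (a : ({j : Fin N // (j : ℕ) ≤ t} → X) × ({j : Fin (N + 1) // (j : ℕ) + v ≤ t} → S)) (b : Y)
    (ha : window t v a = window t v (pastInputs t v ω₀)) :
    prE (jointP ch src)
        {ω | pastInputs t v ω = a ∧ ω.2.2 t = b ∧ pastOutputs t ω = pastOutputs t ω₀} =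
      pastWeight ch src t v (replacePast t v ω₀ a (ω₀.2.2 t)) *
        windowWeight ch t v (replacePast t v ω₀ (pastInputs t v ω₀) b) := by
  rw [fiber_eq_pastEvent, prE_pastEvent_eq_mul hvu]
  congr 1
  · refine pastWeight_congr hvu (fun _ _ => rfl) (fun _ _ => rfl) fun i hi => ?_
    simp only [replacePast, Function.update_of_ne (Fin.ne_of_lt hi)]
  · refine windowWeight_congr (fun i hi hi' => ?_) (fun j hj => ?_) fun _ _ => rfl
    · have hit := Nat.lt_succ_iff.1 hi'
      simp only [replacePast, Function.extend_val_apply (g := a.1) (j := ω₀.1) hit,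
        Function.extend_val_apply (g := (pastInputs t v ω₀).1) (j := ω₀.1) hit]
      exact congrFun (congrArg Prod.fst ha) ⟨i, hi, hit⟩
    · simp only [replacePast, Function.extend_val_apply (g := a.2) (j := ω₀.2.1) hj.le,
        Function.extend_val_apply (g := (pastInputs t v ω₀).2) (j := ω₀.2.1) hj.le]
      exact congrFun (congrArg Prod.snd ha) ⟨j, hj⟩

lemma condMI_pastInputs_eq_window {v : ℕ} (hvu : v ≤ u) (t : Fin N) :
    condMI (jointP ch src) (pastInputs t v) (fun ω => ω.2.2 t) (pastOutputs t) =
      condMI (jointP ch src) (window t v ∘ pastInputs t v) (fun ω => ω.2.2 t)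
        (pastOutputs t) :=
  condMI_comp_eq_of_fiberwise_prod (jointP_nonneg ch src) _ _ _ _ fun ω₀ =>
    ⟨_, _, fun a b ha => prE_fiber_eq_mul hvu t ω₀ a b ha⟩

end Theorem

/-- **Theorem 1, finite-horizon form.** For a
non-controllable FSC with a source in `𝒫(u,u)`, `u ≥ v ≥ 0`, for every
`t ∈ {1,…,N}`:
`I(X^t, S_0^{t-v-1}; Y_t | Y^{t-1}) = I(X_{t-v}^t, S_{t-v-1}; Y_t | Y^{t-1})`
(for `t ≤ v` the state blocks are empty and `X_{t-v}^t` is truncated to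
`X^t`, which the index windows below encode automatically).  Consequently
the two finite-horizon sums coincide. -/
theorem statement4 {X S Y : Type} [Fintype X] [Fintype S] [Fintype Y] {N u : ℕ}
    (ch : NCFSC X S Y) (v : ℕ) (hvu : v ≤ u) (src : Source X S Y N u) :
    (∀ t : Fin N,
      condMI (jointP ch src)
          (fun ω : Traj X S Y N =>
            ((fun j : {j : Fin N // (j : ℕ) ≤ (t : ℕ)} => ω.1 j.1),
              fun j : {j : Fin (N + 1) // (j : ℕ) + v ≤ (t : ℕ)} => ω.2.1 j.1))
          (fun ω => ω.2.2 t)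
          (fun ω => fun j : {j : Fin N // (j : ℕ) < (t : ℕ)} => ω.2.2 j.1) =
        condMI (jointP ch src)
          (fun ω : Traj X S Y N =>
            ((fun j : {j : Fin N // (t : ℕ) ≤ (j : ℕ) + v ∧ (j : ℕ) ≤ (t : ℕ)} => ω.1 j.1),
              fun j : {j : Fin (N + 1) // (j : ℕ) + v = (t : ℕ)} => ω.2.1 j.1))
          (fun ω => ω.2.2 t)
          (fun ω => fun j : {j : Fin N // (j : ℕ) < (t : ℕ)} => ω.2.2 j.1)) ∧
      objFull v ch src = objWin v ch src := by
  have key := fun t : Fin N => condMI_pastInputs_eq_window (ch := ch) (src := src) hvu t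
  exact ⟨key, Finset.sum_congr rfl fun t _ => key t⟩

end FSCPaper
end
end
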